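/- arXiv:0907.0884 — 10 statements merged into one kernel-verified Lean document; each statement's English description precedes it below -/
import Mathlib

section
/- Let (Ω, μ) be a probability space, let X : Ω → 𝒳 be a measurable random variable with finite range 𝒳, and let c : Ω → List Bool be a measurable 'transcript' function with countable range and finite expected length E[|c(ω)|]. Suppose (i) the range of c is an antichain under the prefix order, i.e., for all ω, ω' ∈ Ω, if c(ω) is a prefix of c(ω') then c(ω) = c(ω'); and (ii) c determines X, i.e., for all ω, ω' ∈ Ω, c(ω) = c(ω') implies X(ω) = X(ω'). Then E[|c(ω)|] ≥ H(X). -/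
open MeasureTheory

/-- Shannon entropy (base 2) of a random variable `X` with finite range:
`H(X) = ∑ₓ P[X = x] · log₂(1 / P[X = x])` (terms with `P[X = x] = 0` vanish). -/
noncomputable def shannonEntropy {Ω α : Type*} [MeasurableSpace Ω] [Fintype α]
    (μ : Measure Ω) (X : Ω → α) : ℝ :=
  ∑ x : α, (μ {ω | X ω = x}).toReal * Real.logb 2 (1 / (μ {ω | X ω = x}).toReal)

open scoped ENNReal NNReal

lemma prefix_total {α : Type*} {l₁ l₂ m : List α} (h₁ : l₁ <+: m) (h₂ : l₂ <+: m) :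
    l₁ <+: l₂ ∨ l₂ <+: l₁ := by
  rcases le_total l₁.length l₂.length with h | h
  · left
    rw [List.prefix_iff_eq_take] at h₂ ⊢
    rw [h₂, List.take_take, min_eq_left h, ← List.prefix_iff_eq_take]
    exact h₁
  · right
    rw [List.prefix_iff_eq_take] at h₁ ⊢
    rw [h₁, List.take_take, min_eq_left h, ← List.prefix_iff_eq_take]
    exact h₂

lemma prefix_ofFn_iff {N : ℕ} (l : List Bool) (hl : l.length ≤ N) (f : Fin N → Bool) :
    l <+: List.ofFn f ↔ ∀ i : ℕ, ∀ h : i < l.length, l.get ⟨i, h⟩ = f ⟨i, lt_of_lt_of_le h hl⟩ := by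
  rw [List.prefix_iff_eq_take]
  constructor
  · intro h i hi
    simp only [List.get_eq_getElem]
    rw [List.getElem_of_eq h hi]
    simp
  · intro h
    apply List.ext_getElem
    · simp [hl]
    · intro i h1 h2
      have := h i h1
      simp only [List.get_eq_getElem] at this
      simpa using this

lemma card_ext {N : ℕ} (l : List Bool) (hl : l.length ≤ N) :
    (Finset.univ.filter (fun f : Fin N → Bool => l <+: List.ofFn f)).card
      = 2 ^ (N - l.length) := by
  classical
  have : (Finset.univ.filter (fun f : Fin N → Bool => l <+: List.ofFn f)).card
      = (Finset.univ : Finset (Fin (N - l.length) → Bool)).card := by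
    refine Finset.card_nbij'
      (fun f => fun j : Fin (N - l.length) => f ⟨l.length + j.1, by omega⟩)
      (fun s => fun i : Fin N =>
        if h : i.1 < l.length then l.get ⟨i.1, h⟩ else s ⟨i.1 - l.length, by omega⟩)
      (fun f hf => Finset.mem_univ _) ?_ ?_ ?_
    · intro s hs
      simp only [Finset.mem_coe, Finset.mem_filter, Finset.mem_univ, true_and]
      rw [prefix_ofFn_iff l hl]
      intro i h
      simp [h]
    · intro f hf
      simp only [Finset.mem_coe, Finset.mem_filter, Finset.mem_univ, true_and] at hf
      rw [prefix_ofFn_iff l hl] at hf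
      funext i
      by_cases h : i.1 < l.length
      · simp only [h, dif_pos]
        rw [hf i.1 h]
      · simp only [h, dif_neg]
        exact congrArg f (Fin.ext (by simp; omega))
    · intro s hs
      funext j
      simp only []
      rw [dif_neg (by omega)]
      exact congrArg s (Fin.ext (by simp))
  rw [this]
  simp

lemma kraft_finset (F : Finset (List Bool))
    (hF : ∀ l ∈ F, ∀ l' ∈ F, l <+: l' → l = l') :
    ∑ l ∈ F, ((2:ℝ)⁻¹) ^ l.length ≤ 1 := by
  classical
  set N := F.sup List.length with hN
  have hle : ∀ l ∈ F, l.length ≤ N := fun l hl => Finset.le_sup hl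
  set E : List Bool → Finset (Fin N → Bool) :=
    fun l => Finset.univ.filter (fun f => l <+: List.ofFn f) with hE
  have hdisj : (F : Set (List Bool)).PairwiseDisjoint E := by
    intro l hl l' hl' hne
    simp only [Finset.disjoint_left]
    intro f hf hf'
    simp only [hE, Finset.mem_filter, Finset.mem_univ, true_and] at hf hf'
    rcases prefix_total hf hf' with h | h
    · exact hne (hF l hl l' hl' h)
    · exact hne ((hF l' hl' l hl h).symm)
  have hcard : ∑ l ∈ F, (E l).card = (F.biUnion E).card :=
    (Finset.card_biUnion hdisj).symm
  have hbound : (F.biUnion E).card ≤ 2 ^ N := by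
    calc (F.biUnion E).card ≤ (Finset.univ : Finset (Fin N → Bool)).card :=
          Finset.card_le_univ _
      _ = 2 ^ N := by simp
  have hkey : ∑ l ∈ F, (2:ℕ) ^ (N - l.length) ≤ 2 ^ N := by
    calc ∑ l ∈ F, (2:ℕ) ^ (N - l.length) = ∑ l ∈ F, (E l).card := by
          refine Finset.sum_congr rfl fun l hl => ?_
          rw [hE]
          exact (card_ext l (hle l hl)).symm
      _ ≤ 2 ^ N := hcard ▸ hbound
  have h2N : (0:ℝ) < 2 ^ N := by positivity
  calc ∑ l ∈ F, ((2:ℝ)⁻¹) ^ l.length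
      = (∑ l ∈ F, ((2:ℝ) ^ (N - l.length))) / 2 ^ N := by
        rw [Finset.sum_div]
        refine Finset.sum_congr rfl fun l hl => ?_
        have h1 : l.length ≤ N := hle l hl
        rw [inv_pow, eq_div_iff (by positivity), inv_mul_eq_div]
        rw [eq_comm, eq_div_iff (by positivity), ← pow_add, Nat.sub_add_cancel h1]
    _ ≤ 1 := by
        rw [div_le_one h2N]
        calc (∑ l ∈ F, ((2:ℝ) ^ (N - l.length)))
            = ((∑ l ∈ F, (2:ℕ) ^ (N - l.length) : ℕ) : ℝ) := by push_cast; ring_nf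
          _ ≤ ((2:ℕ)^N : ℕ) := by exact_mod_cast hkey
          _ = (2:ℝ)^N := by push_cast; ring


/-- Any comparison-based algorithm computing `X` needs at least `H(X)` expected
comparisons: if a measurable transcript `c : Ω → List Bool` with countable range and
finite expected length has prefix-free (antichain) range and determines `X`, then
`E[|c|] ≥ H(X)`. -/
theorem stmt1 {Ω 𝒳 : Type*} [MeasurableSpace Ω] (μ : Measure Ω) [IsProbabilityMeasure μ]
    [Fintype 𝒳] (X : Ω → 𝒳) (hX : ∀ x, MeasurableSet {ω | X ω = x})
    (c : Ω → List Bool) (hc : ∀ l, MeasurableSet {ω | c ω = l})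
    (hrange : (Set.range c).Countable)
    (hInt : Integrable (fun ω => ((c ω).length : ℝ)) μ)
    (hpref : ∀ ω ω', c ω <+: c ω' → c ω = c ω')
    (hdet : ∀ ω ω', c ω = c ω' → X ω = X ω') :
    shannonEntropy μ X ≤ ∫ ω, ((c ω).length : ℝ) ∂μ := by
  classical
  set A : List Bool → Set Ω := fun l => {ω | c ω = l} with hA
  have hdisj : Pairwise (Function.onFun Disjoint A) := by
    intro l l' hne
    simp only [Function.onFun, Set.disjoint_left, hA]
    intro ω h1 h2
    exact hne (h1 ▸ h2)
  have hcover : (⋃ l, A l) = Set.univ := by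
    ext ω; simp [hA]
  have hsum_meas : ∑' l, μ (A l) = 1 := by
    rw [← measure_iUnion hdisj (fun l => hc l), hcover, measure_univ]
  have hne_top : ∀ l, μ (A l) ≠ ⊤ := fun l => measure_ne_top μ _
  set p : List Bool → ℝ := fun l => (μ (A l)).toReal with hp
  have hp_nonneg : ∀ l, 0 ≤ p l := fun l => ENNReal.toReal_nonneg
  have hp_le_one : ∀ l, p l ≤ 1 := fun l => by
    have := ENNReal.toReal_mono ENNReal.one_ne_top (prob_le_one (μ := μ) (s := A l))
    simpa using this
  have hsummable_p : Summable p :=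
    ENNReal.summable_toReal (by rw [hsum_meas]; exact ENNReal.one_ne_top)
  have htsum_p : ∑' l, p l = 1 := by
    rw [hp, ← ENNReal.tsum_toReal_eq hne_top, hsum_meas, ENNReal.toReal_one]
  -- lintegral computation
  have hlin : ∫⁻ ω, ((c ω).length : ℝ≥0∞) ∂μ = ∑' l, (l.length : ℝ≥0∞) * μ (A l) := by
    have h1 : ∫⁻ ω, ((c ω).length : ℝ≥0∞) ∂μ
        = ∫⁻ ω in ⋃ l, A l, ((c ω).length : ℝ≥0∞) ∂μ := by
      rw [hcover, Measure.restrict_univ]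
    rw [h1, lintegral_iUnion (fun l => hc l) hdisj]
    apply tsum_congr
    intro l
    rw [setLIntegral_congr_fun (hc l)
      (fun ⦃ω⦄ (hω : c ω = l) => by rw [hω])]
    rw [setLIntegral_const]
  have hnorm : ∀ ω, (‖((c ω).length : ℝ)‖₊ : ℝ≥0∞) = ((c ω).length : ℝ≥0∞) := by
    intro ω
    rw [← enorm_eq_nnnorm, Real.enorm_eq_ofReal (Nat.cast_nonneg _), ENNReal.ofReal_natCast]
  have hfin : ∑' l, (l.length : ℝ≥0∞) * μ (A l) ≠ ⊤ := by
    rw [← hlin]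
    have h2 : ∫⁻ ω, ((c ω).length : ℝ≥0∞) ∂μ = ∫⁻ ω, (‖((c ω).length : ℝ)‖₊ : ℝ≥0∞) ∂μ :=
      lintegral_congr fun ω => (hnorm ω).symm
    rw [h2]
    exact hInt.2.ne
  have hterm_ne_top : ∀ l, (l.length : ℝ≥0∞) * μ (A l) ≠ ⊤ :=
    fun l => ENNReal.mul_ne_top (ENNReal.natCast_ne_top _) (hne_top l)
  have hint_eq : ∫ ω, ((c ω).length : ℝ) ∂μ = ∑' l, p l * l.length := by
    rw [integral_eq_lintegral_of_nonneg_ae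
      (Filter.Eventually.of_forall (fun ω => by positivity)) hInt.1]
    have h3 : ∫⁻ ω, ENNReal.ofReal ((c ω).length : ℝ) ∂μ = ∫⁻ ω, ((c ω).length : ℝ≥0∞) ∂μ :=
      lintegral_congr fun ω => ENNReal.ofReal_natCast _
    rw [h3, hlin, ENNReal.tsum_toReal_eq hterm_ne_top]
    apply tsum_congr
    intro l
    rw [ENNReal.toReal_mul, ENNReal.toReal_natCast]
    ring
  have hsummable_plen : Summable (fun l => p l * l.length) := by
    have := ENNReal.summable_toReal hfin
    apply this.congr
    intro l
    rw [ENNReal.toReal_mul, ENNReal.toReal_natCast]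
    ring
  -- Kraft
  set q : List Bool → ℝ := fun l => if p l = 0 then 0 else ((2:ℝ)⁻¹) ^ l.length with hq
  have hq_nonneg : ∀ l, 0 ≤ q l := fun l => by
    rw [hq]; dsimp only; split <;> positivity
  have hp_pos_of_ne : ∀ l, p l ≠ 0 → 0 < p l := fun l h =>
    lt_of_le_of_ne (hp_nonneg l) (Ne.symm h)
  have hmem_range : ∀ l, p l ≠ 0 → ∃ ω, c ω = l := by
    intro l h
    have hμ : μ (A l) ≠ 0 := by
      intro h0
      apply h
      rw [hp]; dsimp only; rw [h0, ENNReal.toReal_zero]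
    obtain ⟨ω, hω⟩ := nonempty_of_measure_ne_zero hμ
    exact ⟨ω, hω⟩
  have hq_sum_le : ∀ F : Finset (List Bool), ∑ l ∈ F, q l ≤ 1 := by
    intro F
    have heq : ∑ l ∈ F, q l = ∑ l ∈ F.filter (fun l => p l ≠ 0), ((2:ℝ)⁻¹) ^ l.length := by
      rw [Finset.sum_filter]
      refine Finset.sum_congr rfl fun l _ => ?_
      rw [hq]; dsimp only
      by_cases h : p l = 0 <;> simp [h]
    rw [heq]
    apply kraft_finset
    intro l hl l' hl' hpre
    rw [Finset.mem_filter] at hl hl'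
    obtain ⟨ω, hω⟩ := hmem_range l hl.2
    obtain ⟨ω', hω'⟩ := hmem_range l' hl'.2
    rw [← hω, ← hω'] at hpre ⊢
    exact hpref ω ω' hpre
  have hsummable_q : Summable q := summable_of_sum_le hq_nonneg hq_sum_le
  have htsum_q : ∑' l, q l ≤ 1 := Summable.tsum_le_of_sum_le hsummable_q hq_sum_le
  -- Gibbs
  set g : List Bool → ℝ := fun l => p l * Real.logb 2 (1 / p l) with hg
  set r : List Bool → ℝ := fun l => p l * Real.logb 2 (q l / p l) with hr
  have hgr : ∀ l, g l = p l * l.length + r l := by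
    intro l
    by_cases h : p l = 0
    · rw [hg, hr]; dsimp only; rw [h]; ring
    · have hppos : 0 < p l := hp_pos_of_ne l h
      have hql : q l = (2:ℝ)⁻¹ ^ l.length := by rw [hq]; dsimp only; rw [if_neg h]
      have hqpos : 0 < q l := by rw [hql]; positivity
      rw [hg, hr]; dsimp only
      have h1 : (1:ℝ) / p l = (q l / p l) * (1 / q l) := by field_simp
      rw [h1, Real.logb_mul (by positivity) (by positivity)]
      have h2 : Real.logb 2 (1 / q l) = l.length := by
        rw [hql, one_div, ← inv_pow, inv_inv, Real.logb_pow, Real.logb_self_eq_one] <;> norm_num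
      rw [h2]
      ring
  have hrle : ∀ l, r l ≤ (q l - p l) / Real.log 2 := by
    intro l
    by_cases h : p l = 0
    · have hql : q l = 0 := by rw [hq]; dsimp only; rw [if_pos h]
      rw [hr]; dsimp only; rw [h, hql]
      norm_num
    · have hppos : 0 < p l := hp_pos_of_ne l h
      have hql : q l = (2:ℝ)⁻¹ ^ l.length := by rw [hq]; dsimp only; rw [if_neg h]
      have hqpos : 0 < q l := by rw [hql]; positivity
      have hlog : Real.log (q l / p l) ≤ q l / p l - 1 :=
        Real.log_le_sub_one_of_pos (by positivity)
      have h2 : p l * Real.log (q l / p l) ≤ q l - p l := by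
        have h3 := mul_le_mul_of_nonneg_left hlog hppos.le
        have h4 : p l * (q l / p l - 1) = q l - p l := by field_simp
        linarith
      rw [hr]; dsimp only
      rw [Real.logb]
      calc p l * (Real.log (q l / p l) / Real.log 2)
          = (p l * Real.log (q l / p l)) / Real.log 2 := by ring
        _ ≤ (q l - p l) / Real.log 2 :=
            (div_le_div_iff_of_pos_right (Real.log_pos one_lt_two)).mpr h2
  have hg_nonneg : ∀ l, 0 ≤ g l := by
    intro l
    by_cases h : p l = 0
    · rw [hg]; dsimp only; rw [h]; ring_nf; exact le_refl 0
    · have hppos : 0 < p l := hp_pos_of_ne l h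
      apply mul_nonneg (hp_nonneg l)
      exact Real.logb_nonneg one_lt_two (one_le_one_div hppos (hp_le_one l))
  have hg_le : ∀ l, g l ≤ p l * l.length + q l / Real.log 2 := by
    intro l
    rw [hgr l]
    have h1 : r l ≤ q l / Real.log 2 := by
      refine le_trans (hrle l) ?_
      apply (div_le_div_iff_of_pos_right (Real.log_pos one_lt_two)).mpr
      linarith [hp_nonneg l]
    linarith
  have hsummable_g : Summable g :=
    Summable.of_nonneg_of_le hg_nonneg hg_le (hsummable_plen.add (hsummable_q.div_const _))
  have hsummable_r : Summable r := by
    have heq : r = fun l => g l - p l * l.length := funext fun l => by rw [hgr l]; ring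
    rw [heq]
    exact hsummable_g.sub hsummable_plen
  have htsum_r : ∑' l, r l ≤ 0 := by
    have h1 : ∑' l, r l ≤ ∑' l, (q l - p l) / Real.log 2 :=
      Summable.tsum_le_tsum hrle hsummable_r ((hsummable_q.sub hsummable_p).div_const _)
    have h2 : ∑' l, (q l - p l) / Real.log 2 = ((∑' l, q l) - 1) / Real.log 2 := by
      rw [tsum_div_const, Summable.tsum_sub hsummable_q hsummable_p, htsum_p]
    rw [h2] at h1
    refine le_trans h1 ?_
    apply div_nonpos_of_nonpos_of_nonneg
    · linarith
    · exact (Real.log_pos one_lt_two).le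
  have htsum_g_le : ∑' l, g l ≤ ∑' l, p l * l.length := by
    calc ∑' l, g l = ∑' l, (p l * l.length + r l) := tsum_congr hgr
      _ = (∑' l, p l * l.length) + ∑' l, r l := Summable.tsum_add hsummable_plen hsummable_r
      _ ≤ ∑' l, p l * l.length := by linarith
  -- entropy part
  haveI hΩ : Nonempty Ω := by
    by_contra h
    rw [not_nonempty_iff] at h
    have h0 : μ Set.univ = 0 := by
      rw [Set.univ_eq_empty_iff.mpr h, measure_empty]
    rw [measure_univ] at h0
    exact one_ne_zero h0
  haveI : Nonempty 𝒳 := ⟨X (Classical.arbitrary Ω)⟩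
  set f : List Bool → 𝒳 :=
    fun l => if h : ∃ ω, c ω = l then X h.choose else Classical.arbitrary 𝒳 with hf
  have hfc : ∀ ω, f (c ω) = X ω := by
    intro ω
    have h : ∃ ω', c ω' = c ω := ⟨ω, rfl⟩
    rw [hf]; dsimp only; rw [dif_pos h]
    exact hdet _ _ h.choose_spec
  set P : 𝒳 → ℝ := fun x => (μ {ω | X ω = x}).toReal with hP
  have hsub : ∀ l x, f l = x → A l ⊆ {ω | X ω = x} := by
    intro l x hlx ω (hω : c ω = l)
    show X ω = x
    rw [← hfc ω, hω, hlx]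
  have hXset : ∀ x, {ω | X ω = x} = ⋃ l ∈ {l | f l = x}, A l := by
    intro x; ext ω
    simp only [Set.mem_setOf_eq, Set.mem_iUnion]
    constructor
    · intro h
      exact ⟨c ω, by rw [hfc ω, h], rfl⟩
    · rintro ⟨l, h1, (h2 : c ω = l)⟩
      rw [← hfc ω, h2]; exact h1
  have hPx : ∀ x, P x = ∑' l, Set.indicator {l | f l = x} p l := by
    intro x
    rw [hP]; dsimp only
    rw [hXset x, measure_biUnion (Set.to_countable _)
      (fun l _ l' _ hne => hdisj hne) (fun l _ => hc l)]
    rw [ENNReal.tsum_toReal_eq (fun _ => hne_top _)]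
    exact tsum_subtype {l | f l = x} p
  have hxineq : ∀ x : 𝒳,
      P x * Real.logb 2 (1 / P x) ≤ ∑' l, Set.indicator {l | f l = x} g l := by
    intro x
    have hs : Summable (Set.indicator {l | f l = x} p) := hsummable_p.indicator _
    have hsg : Summable (Set.indicator {l | f l = x} g) := hsummable_g.indicator _
    calc P x * Real.logb 2 (1 / P x)
        = ∑' l, (Set.indicator {l | f l = x} p l) * Real.logb 2 (1 / P x) := by
          rw [tsum_mul_right, ← hPx x]
      _ ≤ ∑' l, Set.indicator {l | f l = x} g l := by
          apply Summable.tsum_le_tsum _ (hs.mul_right _) hsg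
          intro l
          by_cases hl : l ∈ {l | f l = x}
          · rw [Set.indicator_of_mem hl, Set.indicator_of_mem hl]
            by_cases h0 : p l = 0
            · rw [hg]; dsimp only; rw [h0]; ring_nf; exact le_refl 0
            · have hppos : 0 < p l := hp_pos_of_ne l h0
              have hple : p l ≤ P x := by
                rw [hp, hP]; dsimp only
                exact ENNReal.toReal_mono (measure_ne_top μ _)
                  (measure_mono (hsub l x hl))
              rw [hg]; dsimp only
              refine mul_le_mul_of_nonneg_left ?_ (hp_nonneg l)
              exact Real.logb_le_logb_of_le one_lt_two
                (one_div_pos.mpr (lt_of_lt_of_le hppos hple))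
                (one_div_le_one_div_of_le hppos hple)
          · rw [Set.indicator_of_notMem hl, Set.indicator_of_notMem hl]
            simp
  have hsum_x : ∑ x : 𝒳, ∑' l, Set.indicator {l | f l = x} g l = ∑' l, g l := by
    rw [← Summable.tsum_finsetSum (fun x _ => hsummable_g.indicator _)]
    apply tsum_congr
    intro l
    rw [Finset.sum_eq_single (f l)]
    · exact Set.indicator_of_mem (s := {l' | f l' = f l}) rfl g
    · intro x _ hx
      exact Set.indicator_of_notMem (fun h => hx (by rw [← h])) _
    · intro h
      exact absurd (Finset.mem_univ _) h
  calc shannonEntropy μ X = ∑ x : 𝒳, P x * Real.logb 2 (1 / P x) := rfl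
    _ ≤ ∑ x : 𝒳, ∑' l, Set.indicator {l | f l = x} g l :=
        Finset.sum_le_sum (fun x _ => hxineq x)
    _ = ∑' l, g l := hsum_x
    _ ≤ ∑' l, p l * l.length := htsum_g_le
    _ = ∫ ω, ((c ω).length : ℝ) ∂μ := hint_eq.symm
end

section
/- Let x₁, …, xₙ be mutually independent real-valued random variables and let v₁ < v₂ < ⋯ < v_m be fixed real numbers. For each i, let B_i = #{j ∈ {1, …, m} : v_j ≤ x_i} be the predecessor index of x_i in the list (v₁, …, v_m), and let π be the random permutation of {1, …, n} that sorts the pairs (x_i, i) in increasing lexicographic order (i.e., π(1), …, π(n) lists the indices so that (x_{π(1)}, π(1)) < (x_{π(2)}, π(2)) < ⋯ lexicographically). Then ∑_{i=1}^n H(B_i) ≤ H(π) + n + m. -/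
/-!
Put `b = (B₁, …, Bₙ)`. The `Bᵢ` are functions of the independent `xᵢ`, so
`∑ H(Bᵢ) = H(b) ≤ H(b, π)`. Since `B` is monotone in `x`, `b ∘ π` is monotone, and a monotone
map `Fin n → Fin (m + 1)` is determined by the `n`-subset `{b j + j}` of `{0, …, n + m - 1}`.
So once `π` is known, `b` takes at most `2^(n+m)` values, and `H(b, π) ≤ H(π) + n + m`.
-/

open MeasureTheory ProbabilityTheory Finset

theorem sum_mul_logb_one_div_le_of_sum_le_one {α : Type*} [Fintype α] {p q : α → ℝ}
    (hp : ∀ a, 0 ≤ p a) (hp₁ : ∑ a, p a = 1) (hq : ∀ a, 0 ≤ q a)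
    (hq₁ : ∑ a, q a ≤ 1) (hpq : ∀ a, 0 < p a → 0 < q a) :
    ∑ a, p a * Real.logb 2 (1 / p a) ≤ ∑ a, p a * Real.logb 2 (1 / q a) := by
  have hterm : ∀ a, p a * Real.log (1 / p a) - p a * Real.log (1 / q a) ≤ q a - p a := by
    intro a
    rcases (hp a).eq_or_lt with hpa | hpa
    · simp [← hpa, hq a]
    · have hqa := hpq a hpa
      calc p a * Real.log (1 / p a) - p a * Real.log (1 / q a) = p a * Real.log (q a / p a) := by
            rw [Real.log_div hqa.ne' hpa.ne', one_div, one_div, Real.log_inv, Real.log_inv]; ring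
        _ ≤ p a * (q a / p a - 1) :=
            mul_le_mul_of_nonneg_left (Real.log_le_sub_one_of_pos (div_pos hqa hpa)) hpa.le
        _ = q a - p a := by field_simp
  have hlog : ∑ a, p a * Real.log (1 / p a) ≤ ∑ a, p a * Real.log (1 / q a) := by
    have := sum_le_sum fun a (_ : a ∈ univ) => hterm a
    rw [sum_sub_distrib, sum_sub_distrib] at this
    linarith
  simp only [Real.logb, mul_div_assoc', ← sum_div]
  exact div_le_div_of_nonneg_right hlog (Real.log_nonneg one_le_two)

section Entropy

variable {Ω α β γ : Type*} [MeasurableSpace Ω] {μ : Measure Ω} [Fintype α] {X : Ω → α}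

theorem shannonEntropy_eq_sum_measureReal (μ : Measure Ω) (X : Ω → α) :
    shannonEntropy μ X =
      ∑ a, μ.real {ω | X ω = a} * Real.logb 2 (1 / μ.real {ω | X ω = a}) :=
  rfl

theorem sum_measureReal_fiber [IsProbabilityMeasure μ]
    (hX : ∀ a, MeasurableSet {ω | X ω = a}) : ∑ a, μ.real {ω | X ω = a} = 1 := by
  have h := sum_measureReal_preimage_singleton (μ := μ) univ fun a _ => hX a
  rw [coe_univ, Set.preimage_univ, probReal_univ] at h
  exact h

theorem measureReal_fiber_comp [IsFiniteMeasure μ] [DecidableEq β]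
    (hX : ∀ a, MeasurableSet {ω | X ω = a}) (f : α → β) (b : β) :
    μ.real {ω | f (X ω) = b} = ∑ a with f a = b, μ.real {ω | X ω = a} := by
  refine Eq.trans ?_ (sum_measureReal_preimage_singleton _ fun a _ => hX a).symm
  congr 1
  ext ω
  simp

theorem sum_measureReal_fiber_mul_comp [Fintype β] [IsFiniteMeasure μ]
    (hX : ∀ a, MeasurableSet {ω | X ω = a}) (f : α → β) (g : β → ℝ) :
    ∑ a, μ.real {ω | X ω = a} * g (f a) = ∑ b, μ.real {ω | f (X ω) = b} * g b := by
  classical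
  rw [← sum_fiberwise univ f]
  refine sum_congr rfl fun b _ => ?_
  rw [measureReal_fiber_comp hX f b, sum_mul]
  exact sum_congr rfl fun a ha => by rw [(mem_filter.1 ha).2]

theorem shannonEntropy_comp_le [Fintype β] [IsFiniteMeasure μ]
    (hX : ∀ a, MeasurableSet {ω | X ω = a}) (f : α → β) :
    shannonEntropy μ (fun ω => f (X ω)) ≤ shannonEntropy μ X := by
  rw [shannonEntropy_eq_sum_measureReal, shannonEntropy_eq_sum_measureReal,
    ← sum_measureReal_fiber_mul_comp hX f]
  refine sum_le_sum fun a _ => ?_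
  rcases (measureReal_nonneg (μ := μ) (s := {ω | X ω = a})).eq_or_lt with hXa | hXa
  · simp [← hXa]
  have hle : μ.real {ω | X ω = a} ≤ μ.real {ω | f (X ω) = f a} :=
    measureReal_mono fun ω (hω : X ω = a) => by simp [hω]
  exact mul_le_mul_of_nonneg_left (Real.logb_le_logb_of_le one_lt_two
    (one_div_pos.2 (hXa.trans_le hle))
    (one_div_le_one_div_of_le hXa hle)) hXa.le

theorem measurableSet_fiber_prodMk {Y : Ω → β} {Z : Ω → γ}
    (hY : ∀ b, MeasurableSet {ω | Y ω = b}) (hZ : ∀ c, MeasurableSet {ω | Z ω = c})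
    (p : β × γ) : MeasurableSet {ω | (Y ω, Z ω) = p} := by
  simpa only [Prod.ext_iff, Set.ofPred_and] using (hY p.1).inter (hZ p.2)

theorem sum_ite_mem_div_le [Fintype β] [DecidableEq β] [Fintype γ] (r : γ → ℝ)
    (hr : ∀ c, 0 ≤ r c) (S : γ → Finset β) {K : ℕ} (hK : ∀ c, #(S c) ≤ K) :
    ∑ p : β × γ, (if p.1 ∈ S p.2 then r p.2 / K else 0) ≤ ∑ c, r c := by
  rw [Fintype.sum_prod_type_right]
  refine sum_le_sum fun c _ => ?_
  simp only [sum_ite_mem, univ_inter, sum_const, nsmul_eq_mul]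
  rcases K.eq_zero_or_pos with hK0 | hK0
  · rw [hK0, Nat.cast_zero, div_zero, mul_zero]
    exact hr c
  calc #(S c) * (r c / K) ≤ K * (r c / K) := by
        gcongr
        · exact div_nonneg (hr c) K.cast_nonneg
        · exact_mod_cast hK c
    _ = r c := by field_simp

/-- Gibbs' inequality against `q (b, c) = P[Z = c] / K` on the pairs with `b ∈ S c`. -/
theorem shannonEntropy_prodMk_le [Fintype β] [Fintype γ] [IsProbabilityMeasure μ]
    {Y : Ω → β} {Z : Ω → γ}
    (hY : ∀ b, MeasurableSet {ω | Y ω = b}) (hZ : ∀ c, MeasurableSet {ω | Z ω = c})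
    (S : γ → Finset β) (hS : ∀ ω, Y ω ∈ S (Z ω)) {K : ℕ} (hK : ∀ c, #(S c) ≤ K) :
    shannonEntropy μ (fun ω => (Y ω, Z ω)) ≤ shannonEntropy μ Z + Real.logb 2 K := by
  classical
  have hW := measurableSet_fiber_prodMk hY hZ
  set q : β × γ → ℝ := fun p => if p.1 ∈ S p.2 then μ.real {ω | Z ω = p.2} / K else 0
  have hq : ∀ p, 0 ≤ q p := fun p => by positivity
  have hq₁ : ∑ p, q p ≤ 1 :=
    (sum_ite_mem_div_le _ (fun _ => measureReal_nonneg) S hK).trans_eq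
      (sum_measureReal_fiber (μ := μ) hZ)
  have hsupp : ∀ p, 0 < μ.real {ω | (Y ω, Z ω) = p} →
      p.1 ∈ S p.2 ∧ 0 < μ.real {ω | Z ω = p.2} ∧ 0 < K := by
    intro p hp
    obtain ⟨ω, hω⟩ := nonempty_of_measure_ne_zero ((measureReal_ne_zero_iff).1 hp.ne')
    have hmem : p.1 ∈ S p.2 := by
      rw [← (hω : (Y ω, Z ω) = p)]
      exact hS ω
    refine ⟨hmem, hp.trans_le (measureReal_mono fun ω' hω' => congrArg Prod.snd hω'), ?_⟩
    exact (card_pos.2 ⟨_, hmem⟩).trans_le (hK p.2)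
  have hlogq : ∀ p, μ.real {ω | (Y ω, Z ω) = p} * Real.logb 2 (1 / q p) =
      μ.real {ω | (Y ω, Z ω) = p} *
        (Real.logb 2 (1 / μ.real {ω | Z ω = p.2}) + Real.logb 2 K) := by
    intro p
    rcases (measureReal_nonneg (μ := μ) (s := {ω | (Y ω, Z ω) = p})).eq_or_lt with hWp | hWp
    · simp [← hWp]
    obtain ⟨hmem, hZp, hK0⟩ := hsupp p hWp
    simp only [q, if_pos hmem]
    rw [one_div_div, Real.logb_div (Nat.cast_pos.2 hK0).ne' hZp.ne', one_div, Real.logb_inv]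
    ring
  calc shannonEntropy μ (fun ω => (Y ω, Z ω))
      ≤ ∑ p, μ.real {ω | (Y ω, Z ω) = p} * Real.logb 2 (1 / q p) :=
        sum_mul_logb_one_div_le_of_sum_le_one (fun _ => measureReal_nonneg)
          (sum_measureReal_fiber hW) hq hq₁ fun p hp => ?_
    _ = ∑ p, μ.real {ω | (Y ω, Z ω) = p} * Real.logb 2 (1 / μ.real {ω | Z ω = p.2}) +
          Real.logb 2 K := by
        simp only [hlogq, mul_add, sum_add_distrib, ← sum_mul]
        rw [sum_measureReal_fiber hW, one_mul]
    _ = shannonEntropy μ Z + Real.logb 2 K := by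
        rw [sum_measureReal_fiber_mul_comp hW Prod.snd
          fun c => Real.logb 2 (1 / μ.real {ω | Z ω = c})]
        rfl
  obtain ⟨hmem, hZp, hK0⟩ := hsupp p hp
  simp only [q, if_pos hmem]
  positivity

theorem shannonEntropy_pi_eq_sum {ι : Type*} [Fintype ι] [DecidableEq ι] {κ : ι → Type*}
    [∀ i, Fintype (κ i)] [∀ i, MeasurableSpace (κ i)] [∀ i, MeasurableSingletonClass (κ i)]
    {B : ∀ i, Ω → κ i} (hB : ∀ i, Measurable (B i)) (hind : iIndepFun B μ) :
    shannonEntropy μ (fun ω i => B i ω) = ∑ i, shannonEntropy μ (B i) := by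
  have := hind.isProbabilityMeasure
  have hfib : ∀ b : ∀ i, κ i, {ω | (fun i => B i ω) = b} = ⋂ i, B i ⁻¹' {b i} := by
    intro b
    ext ω
    simp [funext_iff]
  have hmeas : ∀ b : ∀ i, κ i, MeasurableSet {ω | (fun i => B i ω) = b} := fun b => by
    rw [hfib]
    exact .iInter fun i => hB i (measurableSet_singleton _)
  have hprod : ∀ b : ∀ i, κ i,
      μ.real {ω | (fun i => B i ω) = b} = ∏ i, μ.real {ω | B i ω = b i} := fun b => by
    rw [hfib, measureReal_def,
      hind.meas_iInter fun i => ⟨{b i}, measurableSet_singleton _, rfl⟩, ENNReal.toReal_prod]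
    rfl
  calc shannonEntropy μ (fun ω i => B i ω)
      = ∑ b : ∀ i, κ i, μ.real {ω | (fun i => B i ω) = b} *
          ∑ i, Real.logb 2 (1 / μ.real {ω | B i ω = b i}) := by
        rw [shannonEntropy_eq_sum_measureReal]
        refine sum_congr rfl fun b _ => ?_
        rcases (measureReal_nonneg (μ := μ) (s := {ω | (fun i => B i ω) = b})).eq_or_lt
          with hb | hb
        · simp [← hb]
        have hne : ∀ i ∈ univ, (μ.real {ω | B i ω = b i})⁻¹ ≠ 0 := fun i _ =>
          inv_ne_zero ((prod_ne_zero_iff.1 (hprod b ▸ hb.ne')) i (mem_univ i))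
        rw [hprod b]
        simp only [one_div, ← prod_inv_distrib, Real.logb_prod _ _ hne]
    _ = ∑ i, ∑ b : ∀ i, κ i, μ.real {ω | (fun i => B i ω) = b} *
          Real.logb 2 (1 / μ.real {ω | B i ω = b i}) := by
        simp only [mul_sum]
        exact sum_comm
    _ = ∑ i, shannonEntropy μ (B i) :=
        sum_congr rfl fun i _ => sum_measureReal_fiber_mul_comp hmeas (fun b => b i)
          fun c => Real.logb 2 (1 / μ.real {ω | B i ω = c})

end Entropy

theorem card_filter_monotone_le (n m : ℕ) :
    #{b : Fin n → Fin (m + 1) | Monotone b} ≤ 2 ^ (n + m) := by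
  have hstrict : ∀ b : Fin n → Fin (m + 1), Monotone b →
      StrictMono fun j => (b j : ℕ) + j := fun b hb j k hjk =>
    Nat.add_lt_add_of_le_of_lt (hb hjk.le) hjk
  have hcard := card_le_card_of_injOn (s := {b : Fin n → Fin (m + 1) | Monotone b})
    (t := (range (n + m)).powerset)
    (fun b : Fin n → Fin (m + 1) => univ.image fun j => (b j : ℕ) + j) ?_ ?_
  · simpa using hcard
  · intro b _
    simp only [coe_powerset, Set.mem_preimage, Set.mem_powerset_iff, coe_subset]
    intro c hc
    obtain ⟨j, -, rfl⟩ := mem_image.1 hc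
    have := (b j).is_le
    simp only [mem_range]
    omega
  · intro b hb b' hb' himage
    have hrange := congrArg ((↑) : Finset ℕ → Set ℕ) himage
    simp only [coe_image, coe_univ, Set.image_univ] at hrange
    have := ((hstrict b (mem_filter.1 hb).2).range_inj (hstrict b' (mem_filter.1 hb').2)).1
      hrange
    funext j
    exact Fin.ext (by simpa using congrFun this j)

theorem card_filter_monotone_comp_le {n : ℕ} (m : ℕ) (σ : Equiv.Perm (Fin n)) :
    #{b : Fin n → Fin (m + 1) | Monotone (b ∘ σ)} ≤ 2 ^ (n + m) :=
  (card_le_card_of_injOn (· ∘ σ) (fun b hb => by simpa using (mem_filter.1 hb).2)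
    (σ.surjective.injective_comp_right.injOn)).trans (card_filter_monotone_le n m)

theorem Equiv.Perm.eq_of_strictMono_comp {n : ℕ} {α : Type*} [LinearOrder α] {f : Fin n → α}
    {σ τ : Equiv.Perm (Fin n)} (hσ : StrictMono (f ∘ σ)) (hτ : StrictMono (f ∘ τ)) :
    σ = τ := by
  have hcomp : f ∘ σ = f ∘ τ := (hσ.range_inj hτ).1 (by simp)
  have hf : Function.Injective f := by
    simpa using hσ.injective.comp σ.symm.injective
  exact Equiv.ext fun j => hf (congrFun hcomp j)

section Sorting

variable {Ω : Type*} [MeasurableSpace Ω]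

theorem measurableSet_setOf_strictMono {n : ℕ} {γ : Type*} [Preorder γ]
    {F : Fin n → Ω → γ} (hF : ∀ j k, MeasurableSet {ω | F j ω < F k ω}) :
    MeasurableSet {ω | StrictMono fun j => F j ω} := by
  simp only [StrictMono, Set.ofPred_forall]
  exact .iInter fun j => .iInter fun k => .iInter fun _ => hF j k

theorem measurableSet_toLex_lt {β : Type*} [LT β] {f g : Ω → ℝ} (hf : Measurable f)
    (hg : Measurable g) (i j : β) :
    MeasurableSet {ω | toLex (f ω, i) < toLex (g ω, j)} := by
  simp only [Prod.Lex.toLex_lt_toLex, Set.ofPred_or, Set.ofPred_and]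
  exact (measurableSet_lt hf hg).union ((measurableSet_eq_fun hf hg).inter (.const _))

theorem measurableSet_sortingPerm_eq {n : ℕ} {β : Type*} [LinearOrder β]
    {x : Fin n → Ω → ℝ} (hx : ∀ i, Measurable (x i)) (key : Fin n → β)
    {π : Ω → Equiv.Perm (Fin n)}
    (hπ : ∀ ω, StrictMono fun j => toLex (x (π ω j) ω, key (π ω j))) (σ : Equiv.Perm (Fin n)) :
    MeasurableSet {ω | π ω = σ} := by
  have hfib : {ω | π ω = σ} = {ω | StrictMono fun j => toLex (x (σ j) ω, key (σ j))} := by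
    ext ω
    refine ⟨fun h => h ▸ hπ ω, fun h => ?_⟩
    exact Equiv.Perm.eq_of_strictMono_comp (f := fun i => toLex (x i ω, key i)) (hπ ω) h
  rw [hfib]
  exact measurableSet_setOf_strictMono fun j k => measurableSet_toLex_lt (hx _) (hx _) _ _

end Sorting

def predIndex {α : Type*} [Preorder α] [DecidableLE α] {m : ℕ} (v : Fin m → α) (t : α) :
    Fin (m + 1) :=
  ⟨#{j | v j ≤ t}, Nat.lt_succ_of_le ((card_filter_le _ _).trans_eq (card_fin m))⟩

theorem monotone_predIndex {α : Type*} [Preorder α] [DecidableLE α] {m : ℕ}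
    (v : Fin m → α) : Monotone (predIndex v) := fun _ _ hst =>
  Fin.mk_le_mk.2 <| card_le_card <| monotone_filter_right _ fun _ _ hj => hj.trans hst

theorem stmt3_general {Ω : Type*} [MeasurableSpace Ω] (μ : Measure Ω) [IsProbabilityMeasure μ]
    (n m : ℕ) (x : Fin n → Ω → ℝ) (hx : ∀ i, Measurable (x i))
    (hind : iIndepFun x μ)
    (v : Fin m → ℝ)
    (π : Ω → Equiv.Perm (Fin n))
    (hπ : ∀ ω, StrictMono (fun j : Fin n => toLex (x (π ω j) ω, ((π ω j : ℕ)))))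
    (B : Fin n → Ω → Fin (m + 1))
    (hB : ∀ i ω, (B i ω : ℕ) = (Finset.univ.filter (fun j => v j ≤ x i ω)).card) :
    ∑ i, shannonEntropy μ (B i) ≤ shannonEntropy μ π + n + m := by
  have hBx : ∀ i, B i = predIndex v ∘ x i := fun i => funext fun ω => Fin.ext (hB i ω)
  have hpred := (monotone_predIndex v).measurable
  have hBmeas : ∀ i, Measurable (B i) := fun i => hBx i ▸ hpred.comp (hx i)
  have hindB : iIndepFun B μ := by simpa only [← hBx] using hind.comp _ fun _ => hpred
  have hBfib : ∀ b, MeasurableSet {ω | (fun i => B i ω) = b} := fun b =>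
    measurable_pi_lambda _ hBmeas (measurableSet_singleton b)
  have hπfib := measurableSet_sortingPerm_eq hx (fun i => (i : ℕ)) hπ
  have hsorted : ∀ ω, (fun i => B i ω) ∈ ({b | Monotone (b ∘ π ω)} : Finset _) := by
    intro ω
    simp only [mem_filter, mem_univ, true_and]
    intro j k hjk
    simp only [Function.comp_apply, hBx]
    exact monotone_predIndex v (Prod.Lex.monotone_fst _ _ ((hπ ω).monotone hjk))
  calc ∑ i, shannonEntropy μ (B i) = shannonEntropy μ (fun ω i => B i ω) :=
        (shannonEntropy_pi_eq_sum hBmeas hindB).symm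
    _ ≤ shannonEntropy μ (fun ω => ((fun i => B i ω), π ω)) :=
        shannonEntropy_comp_le (measurableSet_fiber_prodMk hBfib hπfib) Prod.fst
    _ ≤ shannonEntropy μ π + Real.logb 2 (2 ^ (n + m) : ℕ) :=
        shannonEntropy_prodMk_le hBfib hπfib _ hsorted (card_filter_monotone_comp_le m)
    _ = shannonEntropy μ π + n + m := by
        rw [Nat.cast_pow, Nat.cast_ofNat, Real.logb_pow, Real.logb_self_eq_one one_lt_two]
        push_cast
        ring

/-- For mutually independent reals `x₁, …, xₙ` and fixed `v₁ < ⋯ < v_m`, letting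
`B i` be the predecessor index of `x i` in the `v`-list and `π` the permutation sorting
the pairs `(x_i, i)` lexicographically, we have `∑ᵢ H(B i) ≤ H(π) + n + m`. -/
theorem stmt3 {Ω : Type*} [MeasurableSpace Ω] (μ : Measure Ω) [IsProbabilityMeasure μ]
    (n m : ℕ) (x : Fin n → Ω → ℝ) (hx : ∀ i, Measurable (x i))
    (hind : iIndepFun x μ)
    (v : Fin m → ℝ) (hv : StrictMono v)
    (π : Ω → Equiv.Perm (Fin n))
    (hπ : ∀ ω, StrictMono (fun j : Fin n => toLex (x (π ω j) ω, ((π ω j : ℕ)))))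
    (B : Fin n → Ω → Fin (m + 1))
    (hB : ∀ i ω, (B i ω : ℕ) = (Finset.univ.filter (fun j => v j ≤ x i ω)).card) :
    ∑ i, shannonEntropy μ (B i) ≤ shannonEntropy μ π + n + m :=
  stmt3_general μ n m x hx hind v π hπ B hB
end

section
/- There is a universal constant C > 0 with the following property. Let n ≥ 2, λ = ⌈log₂ n⌉, and let D₁, …, Dₙ be atomless Borel probability measures on ℝ. Sample λ·n mutually independent real random variables s_{j,i} (for 1 ≤ j ≤ λ, 1 ≤ i ≤ n) with s_{j,i} distributed according to D_i, let u₁ ≤ u₂ ≤ ⋯ ≤ u_{λn} be these values sorted in nondecreasing order, and set v_k = u_{kλ} for 1 ≤ k ≤ n, with v₀ = −∞ and v_{n+1} = +∞. Independently of the samples, let x₁, …, xₙ be mutually independent with x_i distributed according to D_i, and for 0 ≤ k ≤ n let Z_k = {i ∈ {1, …, n} : v_k ≤ x_i < v_{k+1}}. Then with probability at least 1 − n⁻² over the choice of the samples s_{j,i}, for every k ∈ {0, 1, …, n} one has E[|Z_k|] ≤ C and E[|Z_k|²] ≤ C, where the expectations are over x₁, …, xₙ. -/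
/-!
Let `F x = ∑ᵢ Dᵢ (-∞, x]` be the expected number of inputs at most `x`. The `Dᵢ` are atomless,
so `F` is continuous and its quantiles `q a` (with `F (q a) = a`) cut out windows `(q a, q b)`
of mass exactly `b - a`. A window with `b - a ≥ 10` receives `λ (b - a) ≥ 10 λ` samples on
average, so by a Chernoff bound it receives at most `λ` of them with probability at most
`e^{-4λ} ≤ n⁻⁴`; a union bound over the at most `n²` windows shows that with probability at
least `1 - n⁻²` every such window receives more than `λ` samples. On that event every bucket
`[v_k, v_{k+1})` has mass `W ≤ 12`: at most `λ` samples lie strictly between two consecutive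
thresholds, while a bucket of larger mass contains a window with `b - a ≥ 10`. Finally `|Z_k|`
is a sum of independent indicators with total mean `W`, so `E |Z_k| = W` and
`E |Z_k|² = Var |Z_k| + W² ≤ W + W² ≤ 156`.
-/

open MeasureTheory ProbabilityTheory Finset Set Filter Topology

theorem List.countP_le_of_forall_getElem {α : Type*} {p : α → Bool} {lo hi : ℕ} :
    ∀ {L : List α}, (∀ t (ht : t < L.length), p L[t] → lo ≤ t ∧ t < hi) →
      L.countP p ≤ hi - lo
  | [], _ => by simp
  | a :: L, h => by
    have := countP_le_of_forall_getElem (L := L) (lo := lo - 1) (hi := hi - 1)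
      fun t ht hp => by have := h (t + 1) (by simpa using ht) (by simpa using hp); omega
    rw [List.countP_cons]
    by_cases ha : p a
    · have := h 0 (by simp) (by simpa using ha)
      simp only [ha, if_true]; omega
    · simp only [ha, Bool.false_eq_true, if_false]; omega

section Threshold

variable {κ : Type*} [Fintype κ]

theorem sum_indicator_eq_countP_sort (ω : κ → ℝ) (s : Set ℝ) [DecidablePred (· ∈ s)] :
    ∑ p, s.indicator 1 (ω p) =
      (((univ.val.map ω).sort (· ≤ ·)).countP (fun x => decide (x ∈ s)) : ℝ) := by
  rw [← Multiset.coe_countP, Multiset.sort_eq, Multiset.countP_map]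
  simp only [Set.indicator_apply, Pi.one_apply]
  rw [Finset.sum_boole]
  rfl

noncomputable def threshold (lam n : ℕ) (ω : κ → ℝ) (k : ℕ) : EReal :=
  if k = 0 then ⊥
  else if k = n + 1 then ⊤
  else (((univ.val.map ω).sort (· ≤ ·)).getD (k * lam - 1) 0 : ℝ)

theorem sum_indicator_threshold_le {lam n : ℕ} (hκ : Fintype.card κ = lam * n) (ω : κ → ℝ)
    {k : ℕ} (hk : k ≤ n) :
    ∑ p, {x : ℝ | threshold lam n ω k < x ∧ (x : EReal) < threshold lam n ω (k + 1)}.indicator 1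
      (ω p) ≤ (lam : ℝ) := by
  classical
  rw [sum_indicator_eq_countP_sort]
  set L := (univ.val.map ω).sort (· ≤ ·) with hL
  have hsorted : L.SortedLE := (Multiset.pairwise_sort _ _).sortedLE
  have hlen : L.length = n * lam := by simp [hL, hκ, mul_comm]
  have hkn : k * lam ≤ n * lam := Nat.mul_le_mul_right lam hk
  have hthreshold : ∀ j, j ≠ 0 → j ≠ n + 1 → ∀ hj : j * lam - 1 < L.length,
      threshold lam n ω j = (L[j * lam - 1] : EReal) := by
    intro j hj0 hjn hj
    simp [threshold, hj0, hjn, ← hL, List.getElem?_eq_getElem hj]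
  -- A sample strictly between `v_k` and `v_{k+1}` sits at a sorted position in `[kλ, (k+1)λ)`.
  have hpos : ∀ t (ht : t < L.length), decide (L[t] ∈
      {x : ℝ | threshold lam n ω k < x ∧ (x : EReal) < threshold lam n ω (k + 1)}) →
      k * lam ≤ t ∧ t < (k + 1) * lam := by
    intro t ht hmem
    simp only [decide_eq_true_eq, Set.mem_ofPred_eq] at hmem
    obtain ⟨hlo, hhi⟩ := hmem
    constructor
    · by_contra hlt
      have hk0 : k ≠ 0 := by rintro rfl; omega
      rw [hthreshold k hk0 (by omega) (by omega), EReal.coe_lt_coe_iff] at hlo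
      exact (hsorted.getElem_le_getElem_of_le (by omega : t ≤ k * lam - 1)).not_gt hlo
    · by_cases hkn' : k = n
      · subst hkn'; rw [add_mul]; omega
      · by_contra hge
        have hk1 : (k + 1) * lam ≤ n * lam := Nat.mul_le_mul_right lam (by omega)
        rw [hthreshold (k + 1) (by omega) (by omega) (by omega), EReal.coe_lt_coe_iff] at hhi
        exact (hsorted.getElem_le_getElem_of_le (by omega : (k + 1) * lam - 1 ≤ t)).not_gt hhi
  have := List.countP_le_of_forall_getElem (p := fun x => decide (x ∈ _)) hpos
  rw [add_mul, one_mul, Nat.add_sub_cancel_left] at this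
  exact_mod_cast this

end Threshold

theorem continuous_cdf (μ : Measure ℝ) [IsProbabilityMeasure μ] [NullSingletonClass μ] :
    Continuous (cdf μ) := by
  refine continuous_iff_continuousAt.2 fun x => ?_
  rw [(monotone_cdf μ).continuousAt_iff_leftLim_eq_rightLim, StieltjesFunction.rightLim_eq]
  have h := (cdf μ).measure_singleton x
  rw [measure_cdf, measure_singleton, eq_comm, ENNReal.ofReal_eq_zero, sub_nonpos] at h
  exact le_antisymm ((monotone_cdf μ).leftLim_le le_rfl) h

theorem measureReal_Ioo_eq_cdf_sub (μ : Measure ℝ) [IsProbabilityMeasure μ]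
    [NullSingletonClass μ] {x y : ℝ} (h : x ≤ y) : μ.real (Ioo x y) = cdf μ y - cdf μ x := by
  have hIoc := (cdf μ).measure_Ioc x y
  rw [measure_cdf] at hIoc
  rw [measureReal_def, measure_congr Ioo_ae_eq_Ioc, hIoc,
    ENNReal.toReal_ofReal (sub_nonneg.2 (monotone_cdf μ h))]

section TotalCdf

variable {ι : Type*} [Fintype ι] (D : ι → Measure ℝ)

noncomputable def totalCdf (x : ℝ) : ℝ := ∑ i, cdf (D i) x

noncomputable def totalQuantile (a : ℝ) : ℝ := sInf {x | a ≤ totalCdf D x}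

noncomputable def totalMassBelow (e : EReal) : ℝ := ∑ i, (D i).real {x : ℝ | (x : EReal) < e}

variable {D}

theorem monotone_totalCdf : Monotone (totalCdf D) :=
  fun _ _ h => sum_le_sum fun i _ => monotone_cdf (D i) h

theorem tendsto_totalCdf_atBot : Tendsto (totalCdf D) atBot (𝓝 0) := by
  show Tendsto (fun x => ∑ i, cdf (D i) x) _ _
  simpa using tendsto_finsetSum univ fun i _ => tendsto_cdf_atBot (D i)

theorem tendsto_totalCdf_atTop : Tendsto (totalCdf D) atTop (𝓝 (Fintype.card ι)) := by
  show Tendsto (fun x => ∑ i, cdf (D i) x) _ _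
  simpa using tendsto_finsetSum univ fun i _ => tendsto_cdf_atTop (D i)

theorem bddBelow_setOf_le_totalCdf {a : ℝ} (ha : 0 < a) : BddBelow {x | a ≤ totalCdf D x} := by
  obtain ⟨x₀, hx₀⟩ :=
    ((tendsto_totalCdf_atBot (D := D)).eventually (gt_mem_nhds ha)).exists_forall_of_atBot
  exact ⟨x₀, fun x hx => le_of_not_gt fun hlt => (hx₀ x hlt.le).not_ge hx⟩

theorem totalQuantile_le {a x : ℝ} (ha : 0 < a) (h : a ≤ totalCdf D x) :
    totalQuantile D a ≤ x :=
  csInf_le (bddBelow_setOf_le_totalCdf ha) h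

theorem totalCdf_lt_of_lt_totalQuantile {a x : ℝ} (ha : 0 < a) (h : x < totalQuantile D a) :
    totalCdf D x < a :=
  lt_of_not_ge fun h' => (totalQuantile_le ha h').not_gt h

theorem totalMassBelow_nonneg (e : EReal) : 0 ≤ totalMassBelow D e :=
  sum_nonneg fun _ _ => measureReal_nonneg

variable [∀ i, IsProbabilityMeasure (D i)]

theorem totalCdf_eq_sum_measureReal (x : ℝ) : totalCdf D x = ∑ i, (D i).real (Iic x) := by
  simp [totalCdf, cdf_eq_real]

theorem totalMassBelow_le_card (e : EReal) : totalMassBelow D e ≤ Fintype.card ι := by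
  simpa [totalMassBelow] using Finset.sum_le_sum fun i (_ : i ∈ Finset.univ) =>
    measureReal_le_one (μ := D i) (s := {x : ℝ | (x : EReal) < e})

theorem totalMassBelow_add_sum_measureReal_le {α β : EReal} (h : α ≤ β) :
    totalMassBelow D α + ∑ i, (D i).real {x : ℝ | α ≤ x ∧ (x : EReal) < β} ≤
      totalMassBelow D β := by
  rw [totalMassBelow, totalMassBelow, ← sum_add_distrib]
  refine sum_le_sum fun i _ => ?_
  have hdisj : Disjoint {x : ℝ | (x : EReal) < α} {x : ℝ | α ≤ x ∧ (x : EReal) < β} :=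
    disjoint_left.2 fun x h₁ h₂ => h₂.1.not_gt h₁
  rw [← measureReal_union hdisj (measurable_coe_real_ereal measurableSet_Ico)]
  exact measureReal_mono (union_subset (fun x hx => lt_of_lt_of_le hx h) fun x hx => hx.2)

theorem totalQuantile_le_of_le_totalMassBelow {β : EReal} {b : ℝ} (hb : 0 < b)
    (h : b ≤ totalMassBelow D β) : (totalQuantile D b : EReal) ≤ β := by
  by_contra! hlt
  obtain ⟨r, hβr, hrq⟩ := EReal.lt_iff_exists_real_btwn.1 hlt
  have hsub : {x : ℝ | (x : EReal) < β} ⊆ Iic r :=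
    fun x hx => EReal.coe_le_coe_iff.1 (hx.trans hβr).le
  have : totalMassBelow D β ≤ totalCdf D r := by
    rw [totalCdf_eq_sum_measureReal]
    exact sum_le_sum fun i _ => measureReal_mono hsub
  linarith [totalCdf_lt_of_lt_totalQuantile hb (EReal.coe_lt_coe_iff.1 hrq)]

variable [∀ i, NullSingletonClass (D i)]

theorem continuous_totalCdf : Continuous (totalCdf D) :=
  continuous_finsetSum _ fun i _ => continuous_cdf (D i)

theorem totalCdf_totalQuantile {a : ℝ} (ha₀ : 0 < a) (ha : a < Fintype.card ι) :
    totalCdf D (totalQuantile D a) = a := by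
  have hne : {x | a ≤ totalCdf D x}.Nonempty :=
    (tendsto_totalCdf_atTop.eventually (eventually_ge_nhds ha)).exists
  refine le_antisymm ?_ ((isClosed_le continuous_const continuous_totalCdf).csInf_mem hne
    (bddBelow_setOf_le_totalCdf ha₀))
  have hIic : Iic (totalQuantile D a) ⊆ {x | totalCdf D x ≤ a} := by
    rw [← closure_Iio]
    exact closure_minimal (fun x hx => (totalCdf_lt_of_lt_totalQuantile ha₀ hx).le)
      (isClosed_le continuous_totalCdf continuous_const)
  exact hIic (mem_Iic.2 le_rfl)

theorem sum_measureReal_Ioo_totalQuantile {a b : ℝ} (ha : 0 < a) (hab : a ≤ b)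
    (hb : b < Fintype.card ι) :
    ∑ i, (D i).real (Ioo (totalQuantile D a) (totalQuantile D b)) = b - a := by
  have hFa := totalCdf_totalQuantile (D := D) ha (hab.trans_lt hb)
  have hFb := totalCdf_totalQuantile (D := D) (ha.trans_le hab) hb
  have hq : totalQuantile D a ≤ totalQuantile D b := totalQuantile_le ha (by rw [hFb]; exact hab)
  rw [sum_congr rfl fun i _ => measureReal_Ioo_eq_cdf_sub (D i) hq, sum_sub_distrib]
  exact (congrArg₂ (· - ·) hFb hFa :)

theorem le_totalQuantile_of_totalMassBelow_lt {α : EReal} {a : ℝ} (ha₀ : 0 < a)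
    (ha : a < Fintype.card ι) (h : totalMassBelow D α < a) : α ≤ totalQuantile D a := by
  by_contra! hlt
  have hsub : Iic (totalQuantile D a) ⊆ {x : ℝ | (x : EReal) < α} :=
    fun x hx => (EReal.coe_le_coe_iff.2 hx).trans_lt hlt
  have : a ≤ totalMassBelow D α := by
    rw [← totalCdf_totalQuantile (D := D) ha₀ ha, totalCdf_eq_sum_measureReal]
    exact sum_le_sum fun i _ => measureReal_mono hsub
  linarith

theorem exists_totalQuantile_Ioo_subset {α β : EReal} {g : ℕ}
    (hW : g + 2 < ∑ i, (D i).real {x : ℝ | α ≤ x ∧ (x : EReal) < β}) :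
    ∃ a b : ℕ, 1 ≤ a ∧ a + g ≤ b ∧ b < Fintype.card ι ∧
      Ioo (totalQuantile D a) (totalQuantile D b) ⊆ {x : ℝ | α < x ∧ (x : EReal) < β} := by
  have hαβ : α ≤ β := by
    by_contra! h
    have hempty : {x : ℝ | α ≤ x ∧ (x : EReal) < β} = ∅ :=
      eq_empty_of_forall_notMem fun x hx => (hx.1.trans_lt hx.2).not_gt h
    simp only [hempty, measureReal_empty, sum_const_zero] at hW
    linarith
  have hmass := totalMassBelow_add_sum_measureReal_le (D := D) hαβ
  have hmα := totalMassBelow_nonneg (D := D) α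
  have hmβ := totalMassBelow_nonneg (D := D) β
  have hmβ_le := totalMassBelow_le_card (D := D) β
  set mα := totalMassBelow D α
  set mβ := totalMassBelow D β
  -- `a` is the first integer above the mass below `α`, `b` the last one below the mass below `β`.
  have hceil : 1 ≤ ⌈mβ⌉₊ := Nat.one_le_ceil_iff.2 (by linarith)
  have hgap : ⌊mα⌋₊ + 1 + g < ⌈mβ⌉₊ - 1 := by
    suffices ((⌊mα⌋₊ + 1 + g : ℕ) : ℝ) < ((⌈mβ⌉₊ - 1 : ℕ) : ℝ) by exact_mod_cast this
    push_cast [Nat.cast_sub hceil]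
    linarith [Nat.floor_le hmα, Nat.le_ceil mβ]
  have hb : ⌈mβ⌉₊ - 1 < Fintype.card ι := by
    have := Nat.ceil_le.2 hmβ_le; omega
  refine ⟨⌊mα⌋₊ + 1, ⌈mβ⌉₊ - 1, by omega, by omega, hb, ?_⟩
  have hα : α ≤ totalQuantile D (⌊mα⌋₊ + 1 : ℕ) :=
    le_totalQuantile_of_totalMassBelow_lt (by positivity)
      (by exact_mod_cast (by omega : ⌊mα⌋₊ + 1 < _)) (by exact_mod_cast Nat.lt_floor_add_one mα)
  have hβ : (totalQuantile D (⌈mβ⌉₊ - 1 : ℕ) : EReal) ≤ β := by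
    refine totalQuantile_le_of_le_totalMassBelow (by exact_mod_cast (by omega : 0 < ⌈mβ⌉₊ - 1)) ?_
    push_cast [Nat.cast_sub hceil]
    linarith [Nat.ceil_lt_add_one hmβ]
  exact fun x hx => ⟨hα.trans_lt (EReal.coe_lt_coe_iff.2 hx.1),
    (EReal.coe_lt_coe_iff.2 hx.2).trans_le hβ⟩

end TotalCdf

section Chernoff

variable {Ω : Type*}

theorem exp_neg_indicator_one (s : Set Ω) (y : Ω) :
    Real.exp (-s.indicator 1 y) = 1 - (1 - Real.exp (-1)) * s.indicator 1 y := by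
  by_cases hy : y ∈ s <;> simp [hy]

variable [MeasurableSpace Ω] {s : Set Ω}

theorem integrable_exp_neg_indicator_one (μ : Measure Ω) [IsFiniteMeasure μ]
    (hs : MeasurableSet s) : Integrable (fun y => Real.exp (-s.indicator 1 y)) μ := by
  have hind : Integrable (s.indicator (1 : Ω → ℝ)) μ := (integrable_const (1 : ℝ)).indicator hs
  simp_rw [exp_neg_indicator_one]
  exact (integrable_const 1).sub (hind.const_mul _)

theorem integral_exp_neg_indicator_one_le (μ : Measure Ω) [IsProbabilityMeasure μ]
    (hs : MeasurableSet s) :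
    ∫ y, Real.exp (-s.indicator 1 y) ∂μ ≤ Real.exp (-(μ.real s / 2)) := by
  have he : Real.exp (-1) ≤ 1 / 2 := by
    rw [Real.exp_neg, inv_le_comm₀ (Real.exp_pos 1) (by norm_num)]
    linarith [Real.add_one_le_exp 1]
  have hind : Integrable (s.indicator (1 : Ω → ℝ)) μ := (integrable_const (1 : ℝ)).indicator hs
  simp_rw [exp_neg_indicator_one]
  rw [integral_sub (integrable_const 1) (hind.const_mul _),
    integral_const_mul, integral_indicator_one hs]
  simp only [integral_const, probReal_univ, smul_eq_mul, one_mul]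
  nlinarith [Real.add_one_le_exp (-(μ.real s / 2)), measureReal_nonneg (μ := μ) (s := s)]

theorem measureReal_sum_indicator_le_le_exp {κ : Type*} [Fintype κ] (μ : κ → Measure Ω)
    [∀ p, IsProbabilityMeasure (μ p)] (hs : MeasurableSet s) (ε : ℝ) :
    (Measure.pi μ).real {ω | ∑ p, s.indicator 1 (ω p) ≤ ε} ≤
      Real.exp (ε - (∑ p, (μ p).real s) / 2) := by
  have hexp : ∀ ω : κ → Ω,
      Real.exp (-1 * ∑ p, s.indicator 1 (ω p)) = ∏ p, Real.exp (-s.indicator 1 (ω p)) := by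
    intro ω
    rw [Finset.mul_sum, Real.exp_sum]
    simp only [neg_one_mul]
  have hmgf : mgf (fun ω => ∑ p, s.indicator 1 (ω p)) (Measure.pi μ) (-1) ≤
      Real.exp (-(∑ p, (μ p).real s) / 2) := by
    rw [mgf, funext hexp,
      integral_fintype_prod_eq_prod (f := fun _ y => Real.exp (-s.indicator 1 y)), neg_div,
      sum_div, ← sum_neg_distrib, Real.exp_sum]
    exact prod_le_prod (fun p _ => integral_nonneg fun _ => (Real.exp_pos _).le)
      fun p _ => integral_exp_neg_indicator_one_le (μ p) hs
  calc (Measure.pi μ).real {ω | ∑ p, s.indicator 1 (ω p) ≤ ε}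
      ≤ Real.exp (-(-1) * ε) * mgf (fun ω => ∑ p, s.indicator 1 (ω p)) (Measure.pi μ) (-1) :=
        measure_le_le_exp_mul_mgf ε (by norm_num)
          ((Integrable.fintype_prod fun p => integrable_exp_neg_indicator_one (μ p) hs).congr
            (ae_of_all _ fun ω => (hexp ω).symm))
    _ ≤ Real.exp ε * Real.exp (-(∑ p, (μ p).real s) / 2) := by
        rw [neg_neg, one_mul]; gcongr
    _ = Real.exp (ε - (∑ p, (μ p).real s) / 2) := by rw [← Real.exp_add]; ring_nf

end Chernoff

theorem ncard_setOf_mem_eq_sum_indicator {Ω ι : Type*} [Fintype ι] (x : ι → Ω) (A : Set Ω) :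
    (({i | x i ∈ A}.ncard : ℕ) : ℝ) = ∑ i, A.indicator 1 (x i) := by
  classical
  rw [← coe_filter_univ, ncard_coe_finset, card_filter]
  push_cast
  simp [Set.indicator_apply]

section IndicatorMoments

variable {Ω ι : Type*} [MeasurableSpace Ω] [Fintype ι] (D : ι → Measure Ω)
  [∀ i, IsProbabilityMeasure (D i)] {A : Set Ω}

theorem integral_indicator_eval_pi (hA : MeasurableSet A) (i : ι) :
    ∫ x, A.indicator 1 (x i) ∂(Measure.pi D) = (D i).real A := by
  rw [← integral_indicator_one hA, ← (measurePreserving_eval D i).map_eq,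
    integral_map (measurable_pi_apply i).aemeasurable
      (measurable_const.indicator hA).aestronglyMeasurable]

theorem integral_ncard_setOf_mem_pi (hA : MeasurableSet A) :
    ∫ x, ({i | x i ∈ A}.ncard : ℝ) ∂(Measure.pi D) = ∑ i, (D i).real A := by
  simp_rw [ncard_setOf_mem_eq_sum_indicator]
  rw [integral_finsetSum _ fun i _ => ?_]
  · exact sum_congr rfl fun i _ => integral_indicator_eval_pi D hA i
  · exact ((integrable_const (1 : ℝ)).indicator hA).comp_measurable (measurable_pi_apply i)

theorem integral_ncard_setOf_mem_sq_pi_le (hA : MeasurableSet A) :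
    ∫ x, ({i | x i ∈ A}.ncard : ℝ) ^ 2 ∂(Measure.pi D) ≤
      (∑ i, (D i).real A) + (∑ i, (D i).real A) ^ 2 := by
  have hmean := integral_ncard_setOf_mem_pi D hA
  simp_rw [ncard_setOf_mem_eq_sum_indicator] at hmean ⊢
  set X : ι → (ι → Ω) → ℝ := fun i x => A.indicator 1 (x i)
  have hX : ∀ i, Measurable (X i) :=
    fun i => (measurable_const.indicator hA).comp (measurable_pi_apply i)
  have hsq : ∀ i x, X i x ^ 2 = X i x := fun i x => by
    by_cases h : x i ∈ A <;> simp [X, h]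
  have hmem : ∀ i, MemLp (X i) 2 (Measure.pi D) := fun i =>
    MemLp.of_bound (hX i).aestronglyMeasurable 1 (ae_of_all _ fun x => by
      by_cases h : x i ∈ A <;> simp [X, h])
  have hindep : iIndepFun X (Measure.pi D) :=
    iIndepFun_pi (X := fun _ => A.indicator 1) fun _ => (measurable_const.indicator hA).aemeasurable
  have hvar : Var[∑ i, X i; Measure.pi D] ≤ ∑ i, (D i).real A := by
    rw [IndepFun.variance_sum (fun i _ => hmem i) fun i _ j _ hij => hindep.indepFun hij]
    refine sum_le_sum fun i _ =>
      (variance_le_expectation_sq (hX i).aestronglyMeasurable).trans_eq ?_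
    simp only [Pi.pow_apply, hsq]
    exact integral_indicator_eval_pi D hA i
  rw [variance_eq_sub (memLp_finsetSum' _ fun i _ => hmem i)] at hvar
  simp only [Pi.pow_apply, Finset.sum_apply] at hvar
  rw [hmean] at hvar
  linarith

end IndicatorMoments

theorem one_sub_measureReal_le_of_compl_subset {α : Type*} [MeasurableSpace α] {μ : Measure α}
    [IsProbabilityMeasure μ] {s t : Set α} (h : tᶜ ⊆ s) : 1 - μ.real t ≤ μ.real s := by
  have := measureReal_union_le (μ := μ) t tᶜ
  rw [union_compl_self, probReal_univ] at this
  linarith [measureReal_mono (μ := μ) h]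

theorem log_le_ceil_logb_two (n : ℕ) : Real.log n ≤ ⌈Real.logb 2 n⌉₊ := by
  refine le_trans ?_ (Nat.le_ceil _)
  rw [Real.logb, le_div_iff₀ (Real.log_pos one_lt_two)]
  exact mul_le_of_le_one_right (Real.log_natCast_nonneg n)
    (Real.log_two_lt_d9.le.trans (by norm_num))

section QuantileWindows

variable {ι κ : Type*} [Fintype ι] [Fintype κ] (D : ι → Measure ℝ)

def HitsQuantileWindows (g lam : ℕ) (ω : κ → ℝ) : Prop :=
  ∀ a b : ℕ, 1 ≤ a → a + g ≤ b → b < Fintype.card ι →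
    (lam : ℝ) < ∑ p, (Ioo (totalQuantile D a) (totalQuantile D b)).indicator 1 (ω p)

variable {D} [∀ i, IsProbabilityMeasure (D i)] [∀ i, NullSingletonClass (D i)]

theorem sum_measureReal_threshold_le_of_hitsQuantileWindows {g lam n : ℕ}
    (hκ : Fintype.card κ = lam * n) {ω : κ → ℝ} (hω : HitsQuantileWindows D g lam ω) {k : ℕ}
    (hk : k ≤ n) :
    ∑ i, (D i).real {x : ℝ | threshold lam n ω k ≤ x ∧ (x : EReal) < threshold lam n ω (k + 1)} ≤
      g + 2 := by
  by_contra! hW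
  obtain ⟨a, b, ha, hab, hb, hsub⟩ := exists_totalQuantile_Ioo_subset hW
  have hmono := sum_le_sum fun p (_ : p ∈ Finset.univ) =>
    indicator_le_indicator_of_subset (f := (1 : ℝ → ℝ)) hsub (fun _ => zero_le_one) (ω p)
  linarith [hω a b ha hab hb, sum_indicator_threshold_le hκ ω hk]

theorem measureReal_sum_indicator_Ioo_totalQuantile_le {lam a b : ℕ} (ha : 1 ≤ a)
    (hab : a + 10 ≤ b) (hb : b < Fintype.card ι) (hlam : Real.log (Fintype.card ι) ≤ lam) :
    (Measure.pi fun p : Fin lam × ι => D p.2).real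
        {ω | ∑ p, (Ioo (totalQuantile D a) (totalQuantile D b)).indicator 1 (ω p) ≤ (lam : ℝ)} ≤
      ((Fintype.card ι : ℝ) ^ 4)⁻¹ := by
  have hmass : ∑ p : Fin lam × ι, (D p.2).real (Ioo (totalQuantile D a) (totalQuantile D b)) =
      lam * ((b : ℝ) - a) := by
    simp only [Fintype.sum_prod_type, sum_const, card_univ, Fintype.card_fin, nsmul_eq_mul]
    rw [sum_measureReal_Ioo_totalQuantile (by positivity) (by norm_cast; omega)
      (by exact_mod_cast hb)]
  have hgap : (10 : ℝ) ≤ b - a := by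
    have : ((a + 10 : ℕ) : ℝ) ≤ b := by exact_mod_cast hab
    push_cast at this; linarith
  have hn : (0 : ℝ) < Fintype.card ι := by exact_mod_cast (show 0 < Fintype.card ι by omega)
  refine (measureReal_sum_indicator_le_le_exp _ measurableSet_Ioo _).trans ?_
  calc Real.exp (lam - (∑ p : Fin lam × ι, (D p.2).real _) / 2)
      ≤ Real.exp (-(4 * Real.log (Fintype.card ι))) := by
        rw [hmass]; gcongr; nlinarith [(Nat.cast_nonneg lam : (0 : ℝ) ≤ lam)]
    _ = ((Fintype.card ι : ℝ) ^ 4)⁻¹ := by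
        rw [Real.exp_neg, show (4 : ℝ) * Real.log (Fintype.card ι) =
          Real.log ((Fintype.card ι : ℝ) ^ 4) by rw [Real.log_pow]; norm_num,
          Real.exp_log (by positivity)]

theorem measureReal_not_hitsQuantileWindows_le {lam : ℕ}
    (hlam : Real.log (Fintype.card ι) ≤ lam) :
    (Measure.pi fun p : Fin lam × ι => D p.2).real {ω | ¬HitsQuantileWindows D 10 lam ω} ≤
      ((Fintype.card ι : ℝ) ^ 2)⁻¹ := by
  set n := Fintype.card ι
  set pairs := (Finset.range n ×ˢ Finset.range n).filter
    fun ab : ℕ × ℕ => 1 ≤ ab.1 ∧ ab.1 + 10 ≤ ab.2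
  have hsub : {ω : Fin lam × ι → ℝ | ¬HitsQuantileWindows D 10 lam ω} ⊆ ⋃ ab ∈ pairs,
      {ω | ∑ p, (Ioo (totalQuantile D ab.1) (totalQuantile D ab.2)).indicator 1 (ω p) ≤
        (lam : ℝ)} := by
    intro ω hω
    simp only [HitsQuantileWindows, not_forall, not_lt, mem_ofPred_eq] at hω
    obtain ⟨a, b, ha, hab, hb, hle⟩ := hω
    exact mem_biUnion (x := (a, b)) (by simp [pairs]; omega) hle
  have hcard : (pairs.card : ℝ) ≤ (n : ℝ) ^ 2 := by
    have : pairs.card ≤ n * n := (card_filter_le _ _).trans_eq (by simp)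
    exact_mod_cast this.trans_eq (sq n).symm
  calc _ ≤ _ := measureReal_mono hsub (measure_ne_top _ _)
    _ ≤ _ := measureReal_biUnion_finset_le _ _
    _ ≤ ∑ _ab ∈ pairs, ((n : ℝ) ^ 4)⁻¹ := sum_le_sum fun ab hab => by
        simp only [pairs, mem_filter, mem_product, Finset.mem_range] at hab
        exact measureReal_sum_indicator_Ioo_totalQuantile_le hab.2.1 hab.2.2 hab.1.2 hlam
    _ ≤ (n : ℝ) ^ 2 * ((n : ℝ) ^ 4)⁻¹ := by
        rw [sum_const, nsmul_eq_mul]; gcongr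
    _ = ((n : ℝ) ^ 2)⁻¹ := by
        rcases eq_or_ne (n : ℝ) 0 with h | h
        · simp [h]
        · field_simp

end QuantileWindows

/-- The `V`-list lemma: there is a universal constant `C` such that for any `n ≥ 2` and
atomless distributions `D₁, …, Dₙ` on `ℝ`, if we sample `λ·n` independent values
(`λ = ⌈log₂ n⌉` samples from each `Dᵢ`), sort them into `u₁ ≤ ⋯ ≤ u_{λn}`, and take
`v_k = u_{kλ}` (`v₀ = −∞`, `v_{n+1} = +∞`), then with probability at least `1 − n⁻²`
over the samples, for every `0 ≤ k ≤ n` the group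
`Z_k = {i : v_k ≤ x_i < v_{k+1}}` of a fresh independent input `x ∼ ∏ᵢ Dᵢ` satisfies
`E[|Z_k|] ≤ C` and `E[|Z_k|²] ≤ C`. -/
theorem stmt4 :
    ∃ C : ℝ, 0 < C ∧
      ∀ (n : ℕ), 2 ≤ n →
      ∀ (D : Fin n → Measure ℝ),
        (∀ i, IsProbabilityMeasure (D i)) →
        (∀ i (r : ℝ), D i {r} = 0) →
      ∀ (lam : ℕ), lam = ⌈Real.logb 2 n⌉₊ →
      ∀ (v : (Fin lam × Fin n → ℝ) → Fin (n + 2) → EReal),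
        (∀ ωs k, v ωs k =
          if (k : ℕ) = 0 then (⊥ : EReal)
          else if (k : ℕ) = n + 1 then (⊤ : EReal)
          else ((((Finset.univ.val.map ωs).sort (· ≤ ·)).getD ((k : ℕ) * lam - 1) 0 : ℝ) : EReal)) →
      1 - ((n : ℝ) ^ 2)⁻¹ ≤
        ((Measure.pi (fun p : Fin lam × Fin n => D p.2)) {ωs | ∀ k : Fin (n + 1),
          (∫ ωx, ((Set.ncard {i : Fin n | v ωs k.castSucc ≤ (ωx i : EReal) ∧
              (ωx i : EReal) < v ωs k.succ} : ℝ)) ∂(Measure.pi D)) ≤ C ∧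
          (∫ ωx, ((Set.ncard {i : Fin n | v ωs k.castSucc ≤ (ωx i : EReal) ∧
              (ωx i : EReal) < v ωs k.succ} : ℝ)) ^ 2 ∂(Measure.pi D)) ≤ C}).toReal := by
  refine ⟨156, by norm_num, fun n _ D hD hatom lam hlam v hv => ?_⟩
  have : ∀ i, NullSingletonClass (D i) := fun i => ⟨hatom i⟩
  have hbad := measureReal_not_hitsQuantileWindows_le (D := D) (lam := lam)
    (by rw [Fintype.card_fin, hlam]; exact log_le_ceil_logb_two n)
  rw [Fintype.card_fin] at hbad
  rw [← measureReal_def]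
  refine (sub_le_sub_left hbad 1).trans (one_sub_measureReal_le_of_compl_subset fun ωs hω k => ?_)
  have hW := sum_measureReal_threshold_le_of_hitsQuantileWindows (by simp) (not_not.1 hω)
    (Nat.lt_succ_iff.1 k.isLt)
  have hv' : ∀ j : Fin (n + 2), v ωs j = threshold lam n ωs j := fun j => hv ωs j
  rw [hv', hv', Fin.val_castSucc, Fin.val_succ]
  set A : Set ℝ := {x | threshold lam n ωs k ≤ x ∧ (x : EReal) < threshold lam n ωs (k + 1)}
  have hA : MeasurableSet A := measurable_coe_real_ereal measurableSet_Ico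
  have hW₀ : 0 ≤ ∑ i, (D i).real A := sum_nonneg fun _ _ => measureReal_nonneg
  constructor
  · exact (integral_ncard_setOf_mem_pi D hA).le.trans (by push_cast at hW; linarith)
  · exact (integral_ncard_setOf_mem_sq_pi_le D hA).trans (by push_cast at hW; nlinarith)
end

section
/- Let n ≥ 2, λ = ⌈log₂ n⌉, N = λ·n, and let D₁, …, Dₙ be Borel probability measures on ℝ. Let s₁, …, s_N be mutually independent real random variables where s_ℓ is distributed according to D_{i(ℓ)} with i(ℓ) = ((ℓ − 1) mod n) + 1. Then with probability at least 1 − n⁻², the following holds simultaneously for all pairs of distinct indices a, b ∈ {1, …, N} with s_a ≤ s_b: if the half-open interval [s_a, s_b) contains at most λ of the points {s_ℓ : ℓ ∉ {a, b}}, then ∑_{ℓ ∉ {a,b}} D_{i(ℓ)}([s_a, s_b)) ≤ 11·λ. -/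
/-!
Fix a pair `a, b` and condition on `s_a, s_b`: the other samples stay independent, and if the
interval `I = [s_a, s_b)` carries total mass `m = ∑ D_{i(ℓ)}(I) > 11λ`, then by Markov's
inequality for `2^{-count}`,
`P(at most λ samples in I) ≤ 2^λ ∏ (1 - D_{i(ℓ)}(I)/2) ≤ 2^λ e^{-m/2} ≤ 2^λ e^{-11λ/2}`.
A union bound over the `N²` pairs finishes the proof, since `n ≤ 2^λ` and `λ ≤ 2^λ` give
`n² N² 2^λ ≤ 2^{7λ} ≤ e^{11λ/2}`.
-/

open MeasureTheory ProbabilityTheory Set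
open scoped ENNReal

lemma lintegral_piecewise_inv_two_le_exp {α : Type*} [MeasurableSpace α] (ν : Measure α)
    [IsProbabilityMeasure ν] {s : Set α} (hs : MeasurableSet s) [DecidablePred (· ∈ s)] :
    ∫⁻ x, s.piecewise (fun _ => (2⁻¹ : ℝ≥0∞)) 1 x ∂ν ≤
      ENNReal.ofReal (Real.exp (-ν.real s / 2)) := by
  have hp1 : ν.real s ≤ 1 := measureReal_le_one
  calc ∫⁻ x, s.piecewise (fun _ => (2⁻¹ : ℝ≥0∞)) 1 x ∂ν = 2⁻¹ * ν s + ν sᶜ := by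
        rw [lintegral_piecewise hs, setLIntegral_const, Pi.one_def, setLIntegral_one]
      _ = ENNReal.ofReal (ν.real s / 2 + (1 - ν.real s)) := by
        rw [ENNReal.ofReal_add (by positivity) (by linarith),
          ENNReal.ofReal_sub _ measureReal_nonneg, ofReal_measureReal, prob_compl_eq_one_sub hs,
          div_eq_inv_mul, ENNReal.ofReal_mul (by norm_num), ofReal_measureReal]
        simp
      _ ≤ _ := ENNReal.ofReal_le_ofReal (by linarith [Real.add_one_le_exp (-ν.real s / 2)])

lemma measure_ncard_le_le_of_iIndepFun {Ω ι α : Type*} [MeasurableSpace Ω]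
    [MeasurableSpace α] (μ : Measure Ω) [IsProbabilityMeasure μ] {X : ι → Ω → α}
    (hX : iIndepFun X μ) (hXm : ∀ i, Measurable (X i)) {s : Set α} (hs : MeasurableSet s)
    (J : Finset ι) (k : ℕ) :
    μ {ω | {i | i ∈ J ∧ X i ω ∈ s}.ncard ≤ k} ≤
      ENNReal.ofReal (2 ^ k * Real.exp (-(∑ i ∈ J, μ.real (X i ⁻¹' s)) / 2)) := by
  classical
  set g : α → ℝ≥0∞ := s.piecewise (fun _ => 2⁻¹) 1
  have hg : Measurable g := measurable_const.piecewise hs measurable_const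
  have hprod : ∀ ω, ∏ i ∈ J, g (X i ω) = 2⁻¹ ^ {i | i ∈ J ∧ X i ω ∈ s}.ncard := by
    intro ω
    simp only [g, piecewise_eq_mulIndicator]
    rw [← Finset.coe_filter, Set.ncard_coe_finset,
      Finset.prod_mulIndicator_eq_prod_filter J (fun _ _ => 2⁻¹) (fun _ => s), Finset.prod_const]
  have hfactor : ∀ i, ∫⁻ ω, g (X i ω) ∂μ ≤
      ENNReal.ofReal (Real.exp (-μ.real (X i ⁻¹' s) / 2)) := by
    intro i
    have := Measure.isProbabilityMeasure_map (μ := μ) (hXm i).aemeasurable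
    rw [← lintegral_map hg (hXm i), ← map_measureReal_apply (hXm i) hs]
    exact lintegral_piecewise_inv_two_le_exp _ hs
  have hmarkov : 2⁻¹ ^ k * μ {ω | {i | i ∈ J ∧ X i ω ∈ s}.ncard ≤ k} ≤
      ENNReal.ofReal (Real.exp (-(∑ i ∈ J, μ.real (X i ⁻¹' s)) / 2)) :=
    calc _ ≤ 2⁻¹ ^ k * μ {ω | 2⁻¹ ^ k ≤ ∏ i ∈ J, g (X i ω)} := by
          gcongr with ω
          rw [hprod]
          exact pow_le_pow_right_of_le_one' (by norm_num)
      _ ≤ ∫⁻ ω, ∏ i ∈ J, g (X i ω) ∂μ :=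
        mul_meas_ge_le_lintegral₀
          (J.aemeasurable_fun_prod fun i _ => (hg.comp (hXm i)).aemeasurable) _
      _ = ∏ i ∈ J, ∫⁻ ω, g (X i ω) ∂μ :=
        lintegral_prod_eq_prod_lintegral_of_indepFun J _ (hX.comp (fun _ => g) fun _ => hg)
          fun i => hg.comp (hXm i)
      _ ≤ ∏ i ∈ J, ENNReal.ofReal (Real.exp (-μ.real (X i ⁻¹' s) / 2)) :=
        Finset.prod_le_prod' fun i _ => hfactor i
      _ = _ := by
        rw [← ENNReal.ofReal_prod_of_nonneg fun i _ => (Real.exp_pos _).le, ← Real.exp_sum,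
          ← Finset.sum_div, Finset.sum_neg_distrib]
  calc μ {ω | {i | i ∈ J ∧ X i ω ∈ s}.ncard ≤ k}
      = 2 ^ k * (2⁻¹ ^ k * μ {ω | {i | i ∈ J ∧ X i ω ∈ s}.ncard ≤ k}) := by
        rw [← mul_assoc, ← mul_pow, ENNReal.mul_inv_cancel two_ne_zero ENNReal.ofNat_ne_top,
          one_pow, one_mul]
    _ ≤ 2 ^ k * ENNReal.ofReal (Real.exp (-(∑ i ∈ J, μ.real (X i ⁻¹' s)) / 2)) := by gcongr
    _ = _ := by rw [ENNReal.ofReal_mul (by positivity), ENNReal.ofReal_pow zero_le_two,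
          ENNReal.ofReal_ofNat]

lemma measure_pi_ncard_mem_le_le {ι α : Type*} [Fintype ι] [MeasurableSpace α]
    (μ : ι → Measure α) [∀ i, IsProbabilityMeasure (μ i)] {s : Set α} (hs : MeasurableSet s)
    (J : Finset ι) (k : ℕ) :
    Measure.pi μ {ω | {i | i ∈ J ∧ ω i ∈ s}.ncard ≤ k} ≤
      ENNReal.ofReal (2 ^ k * Real.exp (-(∑ i ∈ J, (μ i).real s) / 2)) := by
  have hlaw : ∀ i, (Measure.pi μ).real ((fun ω : ι → α => ω i) ⁻¹' s) = (μ i).real s := fun i =>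
    (measurePreserving_eval μ i).measureReal_preimage hs.nullMeasurableSet
  have hindep : iIndepFun (fun i (ω : ι → α) => ω i) (Measure.pi μ) :=
    iIndepFun_pi (X := fun _ x => x) fun _ => aemeasurable_id'
  have := measure_ncard_le_le_of_iIndepFun _ hindep measurable_pi_apply hs J k
  rwa [Finset.sum_congr rfl fun i _ => hlaw i] at this

section Resampling

variable {ι : Type*} [DecidableEq ι] {α : ι → Type*} [∀ i, MeasurableSpace (α i)]
  (J : Finset ι)

lemma measurable_finset_piecewise :
    Measurable fun p : (∀ i, α i) × (∀ i, α i) => J.piecewise p.1 p.2 :=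
  measurable_pi_lambda _ fun i => by
    by_cases hi : i ∈ J <;>
      simp only [hi, Finset.piecewise_eq_of_mem, Finset.piecewise_eq_of_notMem,
        not_false_eq_true] <;> fun_prop

variable [Fintype ι] (μ : (i : ι) → Measure (α i)) [∀ i, IsProbabilityMeasure (μ i)]

lemma measurePreserving_finset_piecewise :
    MeasurePreserving (fun p : (∀ i, α i) × (∀ i, α i) => J.piecewise p.1 p.2)
      ((Measure.pi μ).prod (Measure.pi μ)) (Measure.pi μ) where
  measurable := measurable_finset_piecewise J
  map_eq := by
    refine (Measure.pi_eq fun t ht => ?_).symm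
    have hbox : (fun p : (∀ i, α i) × (∀ i, α i) => J.piecewise p.1 p.2) ⁻¹' univ.pi t =
        univ.pi (fun i => if i ∈ J then t i else univ) ×ˢ
          univ.pi (fun i => if i ∈ J then univ else t i) := by
      ext p
      simp only [mem_preimage, mem_univ_pi, mem_prod, ← forall_and]
      refine forall_congr' fun i => ?_
      by_cases hi : i ∈ J <;> simp [hi]
    rw [Measure.map_apply (measurable_finset_piecewise J) (.univ_pi ht), hbox,
      Measure.prod_prod, Measure.pi_pi, Measure.pi_pi, ← Finset.prod_mul_distrib]
    refine Finset.prod_congr rfl fun i _ => ?_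
    by_cases hi : i ∈ J <;> simp [hi]

lemma measure_pi_le_of_forall_piecewise_le {E : Set (∀ i, α i)} (hE : MeasurableSet E)
    {B : ℝ≥0∞} (hB : ∀ ω', Measure.pi μ {ω | J.piecewise ω ω' ∈ E} ≤ B) :
    Measure.pi μ E ≤ B := by
  have hE' := hE.preimage (measurable_finset_piecewise (α := α) J)
  rw [← (measurePreserving_finset_piecewise J μ).measure_preimage hE.nullMeasurableSet,
    Measure.prod_apply_symm hE']
  calc _ ≤ ∫⁻ _, B ∂Measure.pi μ := lintegral_mono hB
    _ = B := by simp

end Resampling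

lemma measurableSet_mem_Ico {β : Type*} [MeasurableSpace β] {f g h : β → ℝ} (hf : Measurable f)
    (hg : Measurable g) (hh : Measurable h) : MeasurableSet {x | f x ∈ Ico (g x) (h x)} :=
  (measurableSet_le hg hf).inter (measurableSet_lt hf hh)

lemma measurable_measure_Ico (ν : Measure ℝ) [SFinite ν] :
    Measurable fun p : ℝ × ℝ => ν (Ico p.1 p.2) :=
  measurable_measure_prodMk_left (measurableSet_mem_Ico measurable_snd
    (measurable_fst.comp measurable_fst) (measurable_snd.comp measurable_fst))

lemma measurableSet_ncard_mem_Ico_le {ι : Type*} (a b : ι) (J : Finset ι) (k : ℕ) :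
    MeasurableSet {ω : ι → ℝ | {ℓ | ℓ ∈ J ∧ ω ℓ ∈ Ico (ω a) (ω b)}.ncard ≤ k} := by
  classical
  simp only [← Finset.coe_filter, Set.ncard_coe_finset, Finset.card_filter]
  refine measurableSet_le (Finset.measurable_sum _ fun ℓ _ => Measurable.ite ?_
    measurable_const measurable_const) measurable_const
  exact measurableSet_mem_Ico (measurable_pi_apply ℓ) (measurable_pi_apply a)
    (measurable_pi_apply b)

lemma one_sub_measureReal_compl_le {Ω : Type*} [MeasurableSpace Ω] (P : Measure Ω)
    [IsProbabilityMeasure P] (G : Set Ω) : 1 - P.real Gᶜ ≤ P.real G := by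
  have := measureReal_union_le (μ := P) G Gᶜ
  rw [union_compl_self, probReal_univ] at this
  linarith

section PairBound

variable {ι : Type*} [Fintype ι] [DecidableEq ι] (μ : ι → Measure ℝ)
  [∀ i, IsProbabilityMeasure (μ i)]

lemma measure_ncard_mem_Ico_le_and_lt_sum_le (a b : ι) (k : ℕ) (m : ℝ) :
    Measure.pi μ {ω | {ℓ | ℓ ≠ a ∧ ℓ ≠ b ∧ ω ℓ ∈ Ico (ω a) (ω b)}.ncard ≤ k ∧
        m < ∑ ℓ ∈ ({a, b}ᶜ : Finset ι), (μ ℓ).real (Ico (ω a) (ω b))} ≤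
      ENNReal.ofReal (2 ^ k * Real.exp (-m / 2)) := by
  set J : Finset ι := {a, b}ᶜ
  have hJ : ∀ ℓ, ℓ ∈ J ↔ ℓ ≠ a ∧ ℓ ≠ b := by simp [J]
  simp only [← and_assoc, ← hJ]
  have hsum : Measurable fun ω : ι → ℝ => ∑ ℓ ∈ J, (μ ℓ).real (Ico (ω a) (ω b)) :=
    Finset.measurable_sum _ fun ℓ _ => (measurable_measure_Ico (μ ℓ)).ennreal_toReal.comp
      (f := fun ω : ι → ℝ => (ω a, ω b)) (by fun_prop)
  -- condition on the coordinates `a` and `b` by freezing them at `ω' a` and `ω' b`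
  refine measure_pi_le_of_forall_piecewise_le J μ
    ((measurableSet_ncard_mem_Ico_le a b J k).inter (measurableSet_lt measurable_const hsum))
    fun ω' => ?_
  have hpw : ∀ ω, J.piecewise ω ω' a = ω' a ∧ J.piecewise ω ω' b = ω' b := fun ω =>
    ⟨Finset.piecewise_eq_of_notMem _ _ _ (by simp [hJ]),
      Finset.piecewise_eq_of_notMem _ _ _ (by simp [hJ])⟩
  have hslice : {ω | J.piecewise ω ω' ∈
      {ω : ι → ℝ | {ℓ | ℓ ∈ J ∧ ω ℓ ∈ Ico (ω a) (ω b)}.ncard ≤ k} ∩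
        {ω | m < ∑ ℓ ∈ J, (μ ℓ).real (Ico (ω a) (ω b))}} =
      {ω | {ℓ | ℓ ∈ J ∧ ω ℓ ∈ Ico (ω' a) (ω' b)}.ncard ≤ k} ∩
        {_ω | m < ∑ ℓ ∈ J, (μ ℓ).real (Ico (ω' a) (ω' b))} := by
    ext ω
    have hcount : {ℓ | ℓ ∈ J ∧ J.piecewise ω ω' ℓ ∈ Ico (ω' a) (ω' b)} =
        {ℓ | ℓ ∈ J ∧ ω ℓ ∈ Ico (ω' a) (ω' b)} := by
      ext ℓ
      exact and_congr_right fun hℓ => by rw [Finset.piecewise_eq_of_mem _ _ _ hℓ]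
    simp only [mem_ofPred_eq, mem_inter_iff, (hpw ω).1, (hpw ω).2, hcount]
  rw [hslice]
  by_cases hm : m < ∑ ℓ ∈ J, (μ ℓ).real (Ico (ω' a) (ω' b))
  · simp only [hm, ofPred_true, inter_univ]
    exact (measure_pi_ncard_mem_le_le μ measurableSet_Ico J k).trans (by gcongr)
  · simp [hm]

lemma one_sub_le_measureReal_forall_sum_measure_Ico_le (k : ℕ) (m : ℝ) :
    1 - (Fintype.card ι : ℝ) ^ 2 * (2 ^ k * Real.exp (-m / 2)) ≤
      (Measure.pi μ).real {ω | ∀ a b : ι, a ≠ b → ω a ≤ ω b →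
        {ℓ | ℓ ≠ a ∧ ℓ ≠ b ∧ ω ℓ ∈ Ico (ω a) (ω b)}.ncard ≤ k →
        ∑ ℓ ∈ ({a, b}ᶜ : Finset ι), (μ ℓ).real (Ico (ω a) (ω b)) ≤ m} := by
  set E : ι × ι → Set (ι → ℝ) := fun q =>
    {ω | {ℓ | ℓ ≠ q.1 ∧ ℓ ≠ q.2 ∧ ω ℓ ∈ Ico (ω q.1) (ω q.2)}.ncard ≤ k ∧
      m < ∑ ℓ ∈ ({q.1, q.2}ᶜ : Finset ι), (μ ℓ).real (Ico (ω q.1) (ω q.2))}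
  have hbad : {ω | ∀ a b : ι, a ≠ b → ω a ≤ ω b →
        {ℓ | ℓ ≠ a ∧ ℓ ≠ b ∧ ω ℓ ∈ Ico (ω a) (ω b)}.ncard ≤ k →
        ∑ ℓ ∈ ({a, b}ᶜ : Finset ι), (μ ℓ).real (Ico (ω a) (ω b)) ≤ m}ᶜ ⊆ ⋃ q, E q := by
    intro ω hω
    simp only [mem_compl_iff, mem_ofPred_eq, not_forall, not_le] at hω
    obtain ⟨a, b, -, -, hcard, hsum⟩ := hω
    exact mem_iUnion.2 ⟨(a, b), hcard, hsum⟩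
  refine le_trans ?_ (one_sub_measureReal_compl_le _ _)
  gcongr
  calc _ ≤ (Measure.pi μ).real (⋃ q, E q) := measureReal_mono hbad
    _ ≤ ∑ q, (Measure.pi μ).real (E q) := measureReal_iUnion_fintype_le E
    _ ≤ ∑ _q : ι × ι, 2 ^ k * Real.exp (-m / 2) := Finset.sum_le_sum fun q _ =>
        ENNReal.toReal_le_of_le_ofReal (by positivity)
          (measure_ncard_mem_Ico_le_and_lt_sum_le μ q.1 q.2 k m)
    _ = _ := by simp [sq]

end PairBound

lemma natCast_le_two_pow_ceil_logb (n : ℕ) : (n : ℝ) ≤ 2 ^ ⌈Real.logb 2 n⌉₊ := by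
  rcases n.eq_zero_or_pos with rfl | hn
  · simp
  calc (n : ℝ) = 2 ^ Real.logb 2 n := (Real.rpow_logb two_pos (by norm_num) (by positivity)).symm
    _ ≤ 2 ^ (⌈Real.logb 2 n⌉₊ : ℝ) := Real.rpow_le_rpow_of_exponent_le one_le_two (Nat.le_ceil _)
    _ = 2 ^ ⌈Real.logb 2 n⌉₊ := Real.rpow_natCast 2 _

lemma two_pow_seven_le_exp_eleven_halves : (2 : ℝ) ^ 7 ≤ Real.exp (11 / 2) := by
  have h5 : (2.7 : ℝ) ^ 5 ≤ Real.exp 5 := by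
    rw [show (5 : ℝ) = (5 : ℕ) * 1 by norm_num, Real.exp_nat_mul]
    gcongr
    linarith [Real.exp_one_gt_d9]
  linarith [Real.exp_le_exp.2 (show (5 : ℝ) ≤ 11 / 2 by norm_num)]

lemma sq_mul_two_pow_mul_exp_le_inv_sq (n lam : ℕ) (hn : (n : ℝ) ≤ 2 ^ lam) :
    ((lam * n : ℕ) : ℝ) ^ 2 * (2 ^ lam * Real.exp (-(11 * lam) / 2)) ≤ ((n : ℝ) ^ 2)⁻¹ := by
  rcases n.eq_zero_or_pos with rfl | hn0
  · simp
  have hlam : (lam : ℝ) ≤ 2 ^ lam := by exact_mod_cast Nat.lt_two_pow_self.le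
  have hexp : Real.exp (-(11 * lam) / 2) = (Real.exp (11 / 2))⁻¹ ^ lam := by
    rw [← Real.exp_neg, ← Real.exp_nat_mul]
    ring_nf
  have h7 : ((2 : ℝ) ^ 7) ^ lam = (2 ^ lam) ^ 7 := by rw [← pow_mul, ← pow_mul, mul_comm]
  rw [← one_div, le_div_iff₀ (by positivity), Nat.cast_mul]
  calc ((lam : ℝ) * n) ^ 2 * (2 ^ lam * Real.exp (-(11 * lam) / 2)) * (n : ℝ) ^ 2
      ≤ (2 ^ lam * 2 ^ lam) ^ 2 * (2 ^ lam * Real.exp (-(11 * lam) / 2)) * (2 ^ lam) ^ 2 := by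
        gcongr
    _ = (2 ^ 7 * (Real.exp (11 / 2))⁻¹) ^ lam := by
        rw [hexp, mul_pow (2 ^ 7 : ℝ), h7]
        ring
    _ ≤ 1 := pow_le_one₀ (by positivity)
        (mul_inv_le_one_of_le₀ two_pow_seven_le_exp_eleven_halves (Real.exp_pos _).le)

theorem stmt5_general (n : ℕ) (lam N : ℕ) (hlam : lam = ⌈Real.logb 2 n⌉₊)
    (hN : N = lam * n) (D : Fin n → Measure ℝ) (hD : ∀ i, IsProbabilityMeasure (D i))
    (idx : Fin N → Fin n) :
    1 - ((n : ℝ) ^ 2)⁻¹ ≤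
      ((Measure.pi (fun ℓ => D (idx ℓ))) {ω | ∀ a b : Fin N, a ≠ b → ω a ≤ ω b →
        Set.ncard {ℓ : Fin N | ℓ ≠ a ∧ ℓ ≠ b ∧ ω ℓ ∈ Set.Ico (ω a) (ω b)} ≤ lam →
        ∑ ℓ ∈ ({a, b}ᶜ : Finset (Fin N)),
          (D (idx ℓ) (Set.Ico (ω a) (ω b))).toReal ≤ 11 * lam}).toReal := by
  have := fun ℓ => hD (idx ℓ)
  have hsmall := sq_mul_two_pow_mul_exp_le_inv_sq n lam (hlam ▸ natCast_le_two_pow_ceil_logb n)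
  calc 1 - ((n : ℝ) ^ 2)⁻¹
      ≤ 1 - (Fintype.card (Fin N) : ℝ) ^ 2 * (2 ^ lam * Real.exp (-(11 * lam) / 2)) := by
        rw [Fintype.card_fin, hN]
        linarith
    _ ≤ _ := one_sub_le_measureReal_forall_sum_measure_Ico_le (fun ℓ => D (idx ℓ)) lam (11 * lam)

/-- With `λ = ⌈log₂ n⌉`, `N = λ·n`, and `N` independent samples `s₁, …, s_N` with
`s_ℓ ∼ D_{i(ℓ)}` (`i(ℓ) = ((ℓ−1) mod n) + 1`), with probability at least `1 − n⁻²`: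
for all distinct `a, b` with `s_a ≤ s_b`, if `[s_a, s_b)` contains at most `λ` of the
other sample points then `∑_{ℓ ∉ {a,b}} D_{i(ℓ)}([s_a, s_b)) ≤ 11·λ`. -/
theorem stmt5 (n : ℕ) (hn : 2 ≤ n) (lam N : ℕ) (hlam : lam = ⌈Real.logb 2 n⌉₊)
    (hN : N = lam * n) (D : Fin n → Measure ℝ) (hD : ∀ i, IsProbabilityMeasure (D i))
    (idx : Fin N → Fin n) (hidx : ∀ ℓ, (idx ℓ : ℕ) = (ℓ : ℕ) % n) :
    1 - ((n : ℝ) ^ 2)⁻¹ ≤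
      ((Measure.pi (fun ℓ => D (idx ℓ))) {ω | ∀ a b : Fin N, a ≠ b → ω a ≤ ω b →
        Set.ncard {ℓ : Fin N | ℓ ≠ a ∧ ℓ ≠ b ∧ ω ℓ ∈ Set.Ico (ω a) (ω b)} ≤ lam →
        ∑ ℓ ∈ ({a, b}ᶜ : Finset (Fin N)),
          (D (idx ℓ) (Set.Ico (ω a) (ω b))).toReal ≤ 11 * lam}).toReal :=
  stmt5_general n lam N hlam hN D hD idx
end

section
/- Let n ≥ 1 and h ≥ 1 be integers with 2^h ≤ n!, and let c ≥ 1 be a real number. Let Φ be a family of partial codes, where each φ ∈ Φ consists of a domain D_φ ⊆ Sₙ (the set of permutations of {1, …, n}) and an injective function φ : D_φ → List Bool whose image is an antichain under the prefix order (for distinct π, π' ∈ D_φ, φ(π) is not a prefix of φ(π')). Suppose that for every subset Π ⊆ Sₙ with |Π| = 2^h there exists φ ∈ Φ with Π ⊆ D_φ and ∑_{π ∈ Π} |φ(π)| ≤ c·(n + h)·2^h. Then |Φ| ≥ (n!/2^h)^{2^h} / ( (n!)^{2^{h−1}} · 2^{c(n+h)·2^h} ). (This is the counting core of the lower bound showing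 that a self-improving sorter handling arbitrary distributions requires 2^{Ω(n log n)} bits of storage.) -/
/-- A partial code on permutations: an injective, prefix-free (antichain) assignment of
Boolean transcripts to the permutations of a domain `dom ⊆ Sₙ`. It abstracts a
comparison tree for sorting: permutations are leaves and codewords are root-to-leaf
comparison transcripts. -/
structure PartialCode (n : ℕ) where
  dom : Finset (Equiv.Perm (Fin n))
  code : Equiv.Perm (Fin n) → List Bool
  inj : ∀ π ∈ dom, ∀ π' ∈ dom, code π = code π' → π = π'
  prefixFree : ∀ π ∈ dom, ∀ π' ∈ dom, code π <+: code π' → π = π'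

/-!
Fix a code `φ`. Since its codewords form an antichain for the prefix order, the concatenation
of the codewords of the elements of a set `Π ⊆ dom φ` of known size `m` (listed in a fixed
order) determines `Π`. Hence the `C(n!, m)` sets of size `m = 2^h` inject into pairs `(φ, w)`
with `φ ∈ Φ` and `w` a binary word of length at most `K = ⌊c(n+h)2^h⌋`; there are fewer than
`|Φ| · 2^(K+1) ≤ |Φ| · (n!)^(2^(h-1)) · 2^(c(n+h)2^h)` of them, while `C(N, m) ≥ (N/m)^m`.
-/

open Finset

theorem Nat.pow_le_choose_mul_pow {n k : ℕ} (hk : k ≤ n) : n ^ k ≤ n.choose k * k ^ k := by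
  have key : n ^ k * k.factorial ≤ n.descFactorial k * k ^ k :=
    calc n ^ k * k.factorial = ∏ i ∈ range k, n * (k - i) := by
          rw [prod_mul_distrib, prod_const, card_range, ← Nat.descFactorial_self,
            Nat.descFactorial_eq_prod_range]
      _ ≤ ∏ i ∈ range k, (n - i) * k := by
          refine prod_le_prod' fun i _ => ?_
          rw [Nat.mul_sub, Nat.sub_mul]
          exact Nat.sub_le_sub_left (by rw [mul_comm n i]; exact Nat.mul_le_mul_left i hk) _
      _ = n.descFactorial k * k ^ k := by
          rw [prod_mul_distrib, prod_const, card_range, Nat.descFactorial_eq_prod_range]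
  rw [Nat.descFactorial_eq_factorial_mul_choose, mul_comm k.factorial, mul_right_comm] at key
  exact Nat.le_of_mul_le_mul_right key k.factorial_pos

theorem Nat.div_pow_le_choose {α : Type*} [Field α] [LinearOrder α] [IsStrictOrderedRing α]
    {n k : ℕ} (hk : k ≤ n) : ((n : α) / k) ^ k ≤ n.choose k := by
  rcases k.eq_zero_or_pos with rfl | hk₀
  · simp
  rw [div_pow, div_le_iff₀ (by positivity)]
  exact_mod_cast Nat.pow_le_choose_mul_pow hk

namespace List

theorem eq_of_flatMap_eq_of_prefixFree {α β : Type*} {s : Set α} {f : α → List β}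
    (hf : ∀ a ∈ s, ∀ b ∈ s, f a <+: f b → a = b) :
    ∀ {l₁ l₂ : List α}, l₁.length = l₂.length → (∀ a ∈ l₁, a ∈ s) → (∀ b ∈ l₂, b ∈ s) →
      l₁.flatMap f = l₂.flatMap f → l₁ = l₂
  | [], [], _, _, _, _ => rfl
  | a :: l₁, b :: l₂, hlen, h₁, h₂, heq => by
    simp only [flatMap_cons] at heq
    have ha := h₁ a mem_cons_self
    have hb := h₂ b mem_cons_self
    -- Both codewords are prefixes of the same word, so the shorter is a prefix of the longer.
    have hab : a = b := by
      have hpa : f a <+: f b ++ l₂.flatMap f := ⟨_, heq⟩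
      have hpb : f b <+: f b ++ l₂.flatMap f := prefix_append _ _
      rcases le_total (f a).length (f b).length with hle | hle
      · exact hf a ha b hb (prefix_of_prefix_length_le hpa hpb hle)
      · exact (hf b hb a ha (prefix_of_prefix_length_le hpb hpa hle)).symm
    subst hab
    rw [eq_of_flatMap_eq_of_prefixFree hf (by simpa using hlen)
      (fun x hx => h₁ x (mem_cons_of_mem _ hx)) (fun x hx => h₂ x (mem_cons_of_mem _ hx))
      (append_cancel_left heq)]

end List

def listsOfLengthLE (α : Type*) [Fintype α] [DecidableEq α] (K : ℕ) : Finset (List α) :=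
  (range (K + 1)).biUnion fun j => univ.image (List.ofFn : (Fin j → α) → List α)

theorem mem_listsOfLengthLE {α : Type*} [Fintype α] [DecidableEq α] {K : ℕ} {l : List α} :
    l ∈ listsOfLengthLE α K ↔ l.length ≤ K := by
  simp only [listsOfLengthLE, mem_biUnion, mem_range, mem_image, mem_univ, true_and,
    Nat.lt_succ_iff]
  constructor
  · rintro ⟨j, hj, f, rfl⟩
    simpa using hj
  · exact fun hl => ⟨l.length, hl, l.get, List.ofFn_get l⟩

theorem card_listsOfLengthLE_le (α : Type*) [Fintype α] [DecidableEq α] (K : ℕ) :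
    #(listsOfLengthLE α K) ≤ ∑ j ∈ range (K + 1), Fintype.card α ^ j :=
  card_biUnion_le.trans <| sum_le_sum fun j _ => card_image_le.trans (by simp)

namespace PartialCode

variable {n : ℕ}

noncomputable def transcript (φ : PartialCode n) (Pi : Finset (Equiv.Perm (Fin n))) :
    List Bool :=
  Pi.toList.flatMap φ.code

theorem length_transcript (φ : PartialCode n) (Pi : Finset (Equiv.Perm (Fin n))) :
    (φ.transcript Pi).length = ∑ π ∈ Pi, (φ.code π).length := by
  rw [transcript, List.length_flatMap, sum_map_toList]

theorem transcript_injOn (φ : PartialCode n) (m : ℕ) :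
    Set.InjOn φ.transcript {Pi | Pi ⊆ φ.dom ∧ #Pi = m} := by
  rintro Pi ⟨hPi, hcard⟩ Pi' ⟨hPi', hcard'⟩ heq
  have hlist : Pi.toList = Pi'.toList :=
    List.eq_of_flatMap_eq_of_prefixFree (s := φ.dom) φ.prefixFree
      (by simp [hcard, hcard']) (fun π hπ => hPi (mem_toList.mp hπ))
      (fun π hπ => hPi' (mem_toList.mp hπ)) heq
  classical
  rw [← toList_toFinset Pi, hlist, toList_toFinset]

theorem card_lt_two_pow_of_sum_length_le (φ : PartialCode n)
    {𝒮 : Finset (Finset (Equiv.Perm (Fin n)))} {m K : ℕ}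
    (h𝒮 : ∀ Pi ∈ 𝒮, Pi ⊆ φ.dom ∧ #Pi = m ∧ ∑ π ∈ Pi, (φ.code π).length ≤ K) :
    #𝒮 < 2 ^ (K + 1) := by
  have hcard : #𝒮 ≤ #(listsOfLengthLE Bool K) := by
    refine card_le_card_of_injOn φ.transcript (fun Pi hPi => ?_) fun Pi hPi Pi' hPi' heq => ?_
    · rw [mem_coe, mem_listsOfLengthLE, length_transcript]
      exact (h𝒮 Pi hPi).2.2
    · obtain ⟨hsub, hcard, -⟩ := h𝒮 Pi hPi
      obtain ⟨hsub', hcard', -⟩ := h𝒮 Pi' hPi'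
      exact φ.transcript_injOn m ⟨hsub, hcard⟩ ⟨hsub', hcard'⟩ heq
  calc #𝒮 ≤ ∑ j ∈ range (K + 1), Fintype.card Bool ^ j :=
        hcard.trans (card_listsOfLengthLE_le Bool K)
    _ < 2 ^ (K + 1) := Nat.geomSum_lt le_rfl fun j hj => mem_range.mp hj

theorem choose_le_card_mul_two_pow (Φ : Finset (PartialCode n)) {m K : ℕ}
    (hcover : ∀ Pi : Finset (Equiv.Perm (Fin n)), #Pi = m →
      ∃ φ ∈ Φ, Pi ⊆ φ.dom ∧ ∑ π ∈ Pi, (φ.code π).length ≤ K) :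
    n.factorial.choose m ≤ #Φ * 2 ^ (K + 1) := by
  classical
  set 𝒮 := (univ : Finset (Equiv.Perm (Fin n))).powersetCard m
  let covered (φ : PartialCode n) :=
    {Pi ∈ 𝒮 | Pi ⊆ φ.dom ∧ ∑ π ∈ Pi, (φ.code π).length ≤ K}
  have hsub : 𝒮 ⊆ Φ.biUnion covered := fun Pi hPi => by
    obtain ⟨φ, hφ, hdom, hlen⟩ := hcover Pi (mem_powersetCard_univ.mp hPi)
    exact mem_biUnion.mpr ⟨φ, hφ, mem_filter.mpr ⟨hPi, hdom, hlen⟩⟩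
  calc n.factorial.choose m = #𝒮 := by simp [𝒮, Fintype.card_perm]
    _ ≤ #(Φ.biUnion covered) := card_le_card hsub
    _ ≤ #Φ * 2 ^ (K + 1) := card_biUnion_le_card_mul _ _ _ fun φ _ =>
        (φ.card_lt_two_pow_of_sum_length_le fun Pi hPi => by
          obtain ⟨hPi, hdom, hlen⟩ := mem_filter.mp hPi
          exact ⟨hdom, mem_powersetCard_univ.mp hPi, hlen⟩).le

end PartialCode

theorem stmt8_general (n h : ℕ) (hh : 1 ≤ h) (hhn : 2 ^ h ≤ n.factorial)
    (c : ℝ) (hc : 1 ≤ c) (Φ : Finset (PartialCode n))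
    (hcover : ∀ Pi : Finset (Equiv.Perm (Fin n)), Pi.card = 2 ^ h →
      ∃ φ ∈ Φ, Pi ⊆ φ.dom ∧
        (∑ π ∈ Pi, ((φ.code π).length : ℝ)) ≤ c * ((n : ℝ) + (h : ℝ)) * 2 ^ h) :
    ((n.factorial : ℝ) / 2 ^ h) ^ (2 ^ h) /
        ((n.factorial : ℝ) ^ (2 ^ (h - 1)) *
          (2 : ℝ) ^ (c * ((n : ℝ) + (h : ℝ)) * 2 ^ h)) ≤ (Φ.card : ℝ) := by
  set α := c * ((n : ℝ) + (h : ℝ)) * 2 ^ h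
  have hα : 0 ≤ α := by positivity
  have hcount : n.factorial.choose (2 ^ h) ≤ #Φ * 2 ^ (⌊α⌋₊ + 1) :=
    PartialCode.choose_le_card_mul_two_pow Φ fun Pi hPi => by
      obtain ⟨φ, hφ, hdom, hlen⟩ := hcover Pi hPi
      exact ⟨φ, hφ, hdom, Nat.le_floor (by exact_mod_cast hlen)⟩
  have hfloor : (2 : ℝ) ^ (⌊α⌋₊ + 1) ≤ 2 * 2 ^ α := by
    rw [pow_succ', ← Real.rpow_natCast]
    gcongr
    · norm_num
    · exact Nat.floor_le hα
  have htwo : (2 : ℝ) ≤ (n.factorial : ℝ) ^ 2 ^ (h - 1) := by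
    have hfact : (2 : ℝ) ≤ n.factorial := by
      exact_mod_cast (Nat.le_self_pow (by omega) 2).trans hhn
    exact hfact.trans (le_self_pow₀ (by linarith) (by positivity))
  rw [div_le_iff₀ (by positivity)]
  calc ((n.factorial : ℝ) / 2 ^ h) ^ 2 ^ h ≤ n.factorial.choose (2 ^ h) := by
        exact_mod_cast Nat.div_pow_le_choose (α := ℝ) hhn
    _ ≤ #Φ * 2 ^ (⌊α⌋₊ + 1) := by exact_mod_cast hcount
    _ ≤ #Φ * ((n.factorial : ℝ) ^ 2 ^ (h - 1) * 2 ^ α) := by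
        gcongr
        exact hfloor.trans (by gcongr)

/-- The counting core of the `2^{Ω(n log n)}` storage lower bound for self-improving
sorters handling arbitrary distributions: if every set `Π` of `2^h` permutations is
covered by some code in `Φ` with total transcript length at most `c(n+h)2^h`, then
`|Φ| ≥ (n!/2^h)^{2^h} / ((n!)^{2^{h−1}} · 2^{c(n+h)2^h})`. -/
theorem stmt8 (n h : ℕ) (hn : 1 ≤ n) (hh : 1 ≤ h) (hhn : 2 ^ h ≤ n.factorial)
    (c : ℝ) (hc : 1 ≤ c) (Φ : Finset (PartialCode n))
    (hcover : ∀ Pi : Finset (Equiv.Perm (Fin n)), Pi.card = 2 ^ h →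
      ∃ φ ∈ Φ, Pi ⊆ φ.dom ∧
        (∑ π ∈ Pi, ((φ.code π).length : ℝ)) ≤ c * ((n : ℝ) + (h : ℝ)) * 2 ^ h) :
    ((n.factorial : ℝ) / 2 ^ h) ^ (2 ^ h) /
        ((n.factorial : ℝ) ^ (2 ^ (h - 1)) *
          (2 : ℝ) ^ (c * ((n : ℝ) + (h : ℝ)) * 2 ^ h)) ≤ (Φ.card : ℝ) :=
  stmt8_general n h hh hhn c hc Φ hcover
end

section
/- Fix an integer n ≥ 1 and a permutation σ of {1, …, n}. For a sequence x = (x₁, …, xₙ) with each xᵢ ∈ {1, …, n}, let π(x) denote the unique permutation of {1, …, n} such that the pairs (x_{π(x)(1)}, π(x)(1)), (x_{π(x)(2)}, π(x)(2)), …, (x_{π(x)(n)}, π(x)(n)) are strictly increasing in lexicographic order. Then the number of sequences x ∈ {1, …, n}ⁿ with π(x) = σ is at most 2^{2n−1}. -/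
/-!
Shifting the `j`-th smallest entry `x (σ j)` up by `j` turns the sorted, weakly increasing sequence
`j ↦ x (σ j)` into a strictly increasing sequence in `{0, …, 2n - 2}`. This encoding is injective,
and a strictly increasing sequence is determined by its range, a subset of a `(2n - 1)`-element set.
-/

theorem Prod.Lex.monotone_fst_of_strictMono {ι α β : Type*} [PartialOrder ι] [Preorder α]
    [Preorder β] {f : ι → α} {g : ι → β} (h : StrictMono fun i => toLex (f i, g i)) : Monotone f :=
  Prod.Lex.monotone_fst_ofLex.comp h.monotone

theorem Set.ncard_setOf_strictMono_le {β γ : Type*} [LinearOrder β] [WellFoundedLT β] [Preorder γ]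
    [Fintype γ] : {f : β → γ | StrictMono f}.ncard ≤ 2 ^ Fintype.card γ := by
  calc {f : β → γ | StrictMono f}.ncard ≤ (Set.univ : Set (Set γ)).ncard :=
        Set.ncard_le_ncard_of_injOn Set.range (fun _ _ => Set.mem_univ _)
          Set.range_injOn_strictMono Set.finite_univ
    _ = 2 ^ Fintype.card γ := by
        rw [Set.ncard_univ, Nat.card_eq_fintype_card, Fintype.card_set]

def shiftedSort {n : ℕ} (σ : Equiv.Perm (Fin n)) (x : Fin n → Fin n) : Fin n → Fin (2 * n - 1) :=
  fun j => ⟨x (σ j) + j, by omega⟩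

theorem shiftedSort_injective {n : ℕ} (σ : Equiv.Perm (Fin n)) :
    Function.Injective (shiftedSort σ) := by
  intro x y hxy
  funext i
  have h := congrArg Fin.val (congrFun hxy (σ.symm i))
  simp only [shiftedSort, Equiv.apply_symm_apply, Nat.add_right_cancel_iff] at h
  exact Fin.ext h

theorem strictMono_shiftedSort {n : ℕ} {σ : Equiv.Perm (Fin n)} {x : Fin n → Fin n}
    (hx : StrictMono fun j => toLex (x (σ j), σ j)) : StrictMono (shiftedSort σ x) := by
  have hmono : Monotone fun j => (x (σ j) : ℕ) :=
    Fin.val_strictMono.monotone.comp (Prod.Lex.monotone_fst_of_strictMono hx)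
  exact fun j k hjk => show (x (σ j) : ℕ) + j < x (σ k) + k from
    hmono.add_strictMono Fin.val_strictMono hjk

theorem stmt9_general (n : ℕ) (σ : Equiv.Perm (Fin n)) :
    Set.ncard {x : Fin n → Fin n |
      StrictMono (fun j : Fin n => toLex (x (σ j), σ j))} ≤ 2 ^ (2 * n - 1) := by
  calc _ ≤ {f : Fin n → Fin (2 * n - 1) | StrictMono f}.ncard :=
        Set.ncard_le_ncard_of_injOn (shiftedSort σ) (fun _ hx => strictMono_shiftedSort hx)
          (shiftedSort_injective σ).injOn (Set.toFinite _)
    _ ≤ 2 ^ (2 * n - 1) := by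
        simpa using Set.ncard_setOf_strictMono_le (β := Fin n) (γ := Fin (2 * n - 1))

/-- For a fixed permutation `σ`, the number of sequences `x ∈ {1, …, n}ⁿ` whose
lexicographic sorting permutation is `σ` (i.e. `j ↦ (x_{σ(j)}, σ(j))` is strictly
increasing in the lexicographic order) is at most `2^{2n−1}`. -/
theorem stmt9 (n : ℕ) (hn : 1 ≤ n) (σ : Equiv.Perm (Fin n)) :
    Set.ncard {x : Fin n → Fin n |
      StrictMono (fun j : Fin n => toLex (x (σ j), σ j))} ≤ 2 ^ (2 * n - 1) :=
  stmt9_general n σ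
end

section
/- Let n ≥ 1 and κ ≥ 2 be integers with κ even, and let E be a set of vectors in {1, …, n}ⁿ (i.e., E ⊆ (Fin n → Fin n)). Then the number of n-tuples (S₁, …, Sₙ), where each Sᵢ is a κ-element subset of {1, …, n}, for which there exists a matrix A ∈ {1, …, n}^{n×κ} such that the i-th row of A enumerates Sᵢ for every i (i.e., {A(i,1), …, A(i,κ)} = Sᵢ) and at least κ/2 of the columns of A belong to E, is at most |E|^{κ/2} · n^{κn/2}. -/
/-! Permuting the columns of a matrix does not change its row sets. So a witness matrix may be
reordered to have `m = κ / 2` columns in `E` first, and every counted tuple is the tuple of row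
sets of a pair (`m` columns from `E`, `m` arbitrary columns). There are `|E| ^ m * (n ^ n) ^ m`
such pairs. -/

open Finset

section

variable {ι ι' α β : Type*}

def rowSets [Fintype ι] [DecidableEq β] (c : ι → α → β) (i : α) : Finset β :=
  univ.image fun j => c j i

theorem rowSets_comp_equiv [Fintype ι] [Fintype ι'] [DecidableEq β] (c : ι → α → β)
    (e : ι' ≃ ι) : rowSets (c ∘ e) = rowSets c := by
  ext i b
  simp only [rowSets, mem_image, mem_univ, true_and, Function.comp_apply]
  exact e.exists_congr_right (q := (c · i = b))

theorem exists_sumEquiv_inl_mem [Fintype ι] {m k : ℕ} (hι : Fintype.card ι = m + k)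
    (s : Finset ι) (hs : m ≤ #s) : ∃ e : Fin m ⊕ Fin k ≃ ι, ∀ j, e (.inl j) ∈ s := by
  classical
  obtain ⟨t, hts, ht⟩ := exists_subset_card_eq hs
  have htc : Fintype.card {x // x ∉ t} = k := by
    rw [Fintype.card_subtype_compl, Fintype.card_coe, ht, hι, Nat.add_sub_cancel_left]
  let e := (Equiv.sumCongr (t.equivFinOfCardEq ht).symm (Fintype.equivFinOfCardEq htc).symm).trans
    (Equiv.sumCompl (· ∈ t))
  exact ⟨e, fun j => hts ((t.equivFinOfCardEq ht).symm j).2⟩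

theorem ncard_setOf_rows_image_many_cols_mem_le [Fintype ι] [Fintype α] [Fintype β]
    [DecidableEq β] {m k : ℕ} (hι : Fintype.card ι = m + k) (E : Set (α → β)) :
    {S : α → Finset β | ∃ A : α → ι → β, (∀ i, univ.image (A i) = S i) ∧
        m ≤ {j | (fun i => A i j) ∈ E}.ncard}.ncard ≤
      E.ncard ^ m * (Fintype.card β ^ Fintype.card α) ^ k := by
  classical
  let g : (Fin m → E) × (Fin k → α → β) → α → Finset β :=
    fun p => rowSets (Sum.elim (fun j => (p.1 j : α → β)) p.2)
  have hsub : {S : α → Finset β | ∃ A : α → ι → β, (∀ i, univ.image (A i) = S i) ∧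
      m ≤ {j | (fun i => A i j) ∈ E}.ncard} ⊆ Set.range g := by
    rintro S ⟨A, hS, hA⟩
    obtain rfl : (fun i => univ.image (A i)) = S := funext hS
    rw [Set.ncard_eq_toFinset_card'] at hA
    obtain ⟨e, he⟩ := exists_sumEquiv_inl_mem hι _ hA
    let col : ι → α → β := fun j i => A i j
    refine ⟨(fun j => ⟨col (e (.inl j)), by simpa using he j⟩, fun j => col (e (.inr j))),
      ?_⟩
    have hcols : Sum.elim (fun j => col (e (.inl j))) (fun j => col (e (.inr j))) = col ∘ e := by
      funext j; cases j <;> rfl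
    simp only [g, hcols, rowSets_comp_equiv]
    rfl
  calc _ ≤ (Set.range g).ncard := Set.ncard_le_ncard hsub
    _ ≤ Nat.card ((Fin m → E) × (Fin k → α → β)) := by
      rw [← Nat.card_coe_set_eq]; exact Finite.card_range_le g
    _ = _ := by
      rw [Nat.card_prod, Nat.card_fun, Nat.card_fun, Nat.card_fun, Nat.card_coe_set_eq]
      simp only [Nat.card_eq_fintype_card, Fintype.card_fin]

end

theorem stmt10_general (n κ : ℕ) (hκeven : Even κ)
    (E : Set (Fin n → Fin n)) :
    Set.ncard {S : Fin n → Finset (Fin n) |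
      (∀ i, (S i).card = κ) ∧
      ∃ A : Fin n → Fin κ → Fin n,
        (∀ i, Finset.image (A i) Finset.univ = S i) ∧
        κ / 2 ≤ Set.ncard {j : Fin κ | (fun i => A i j) ∈ E}} ≤
      E.ncard ^ (κ / 2) * n ^ (κ * n / 2) := by
  obtain ⟨m, rfl⟩ := hκeven
  have hm : (m + m) / 2 = m := by omega
  have hexp : (m + m) * n / 2 = n * m := by
    rw [← two_mul, mul_assoc, Nat.mul_div_cancel_left _ two_pos, mul_comm]
  rw [hm, hexp, pow_mul]
  calc _ ≤ _ := Set.ncard_le_ncard (fun S hS => hS.2) (Set.toFinite _)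
    _ ≤ _ := ncard_setOf_rows_image_many_cols_mem_le (Fintype.card_fin (m + m)) E
    _ = _ := by simp only [Fintype.card_fin]

/-- Counting product distributions with many easy projections: the number of `n`-tuples
`(S₁, …, Sₙ)` of `κ`-element subsets of `{1, …, n}` admitting a matrix
`A ∈ {1, …, n}^{n×κ}` whose `i`-th row enumerates `Sᵢ` and at least `κ/2` of whose
columns lie in `E` is at most `|E|^{κ/2} · n^{κn/2}`. -/
theorem stmt10 (n κ : ℕ) (hn : 1 ≤ n) (hκ : 2 ≤ κ) (hκeven : Even κ)
    (E : Set (Fin n → Fin n)) :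
    Set.ncard {S : Fin n → Finset (Fin n) |
      (∀ i, (S i).card = κ) ∧
      ∃ A : Fin n → Fin κ → Fin n,
        (∀ i, Finset.image (A i) Finset.univ = S i) ∧
        κ / 2 ≤ Set.ncard {j : Fin κ | (fun i => A i j) ∈ E}} ≤
      E.ncard ^ (κ / 2) * n ^ (κ * n / 2) :=
  stmt10_general n κ hκeven E
end

section
/- Let V and I be finite sets of points in the Euclidean plane ℝ², let v ∈ V, and let t₁, t₂, t₃ ∈ ℝ². Let s be the convex hull of {t₁, t₂, t₃}, and suppose s is contained in the Voronoi region of v with respect to V, i.e., for every p ∈ s and every w ∈ V, dist(p, v) ≤ dist(p, w). Define Z = {v} ∪ {y ∈ I : dist(y, t_j) < dist(v, t_j) for some j ∈ {1, 2, 3}}. Then for every p ∈ s, the distance from p to the nearest point of V ∪ I equals the distance from p to the nearest point of Z: min_{y ∈ V ∪ I} dist(p, y) = min_{z ∈ Z} dist(p, z). (Hence the Voronoi diagram of V ∪ I restricted to s coincides with the Voronoi diagram of Z restricted to s.) -/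
/-!
The points at least as close to `v` as to `y` form a half-plane, which is convex. A point `y ∈ I`
outside `Z` is no closer than `v` to any vertex `t j`, so every point of `s = conv{t j}` is at least
as close to `v` as to `y`. Points of `V` lose to `v` by the Voronoi hypothesis, so `v ∈ Z` beats
every point of `(V ∪ I) \ Z`.
-/

open scoped RealInnerProductSpace

section

variable {E : Type*} [NormedAddCommGroup E] [InnerProductSpace ℝ E]

theorem dist_le_dist_iff_inner_le (p v y : E) :
    dist p v ≤ dist p y ↔ ⟪y - v, p⟫ ≤ (‖y‖ ^ 2 - ‖v‖ ^ 2) / 2 := by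
  rw [dist_eq_norm, dist_eq_norm, ← sq_le_sq₀ (norm_nonneg _) (norm_nonneg _),
    norm_sub_sq_real, norm_sub_sq_real, inner_sub_left, real_inner_comm p y, real_inner_comm p v]
  constructor <;> intro h <;> linarith

theorem convex_setOf_dist_le_dist (v y : E) : Convex ℝ {p : E | dist p v ≤ dist p y} := by
  simp only [dist_le_dist_iff_inner_le]
  exact convex_halfSpace_le (innerₛₗ ℝ (y - v)).isLinear _

theorem convexHull_subset_setOf_dist_le_dist {s : Set E} {v y : E}
    (h : ∀ q ∈ s, dist q v ≤ dist q y) : convexHull ℝ s ⊆ {p | dist p v ≤ dist p y} :=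
  convexHull_min h (convex_setOf_dist_le_dist v y)

end

theorem stmt12_general (V I : Finset (EuclideanSpace ℝ (Fin 2)))
    (v : EuclideanSpace ℝ (Fin 2)) (hv : v ∈ V)
    (t : Fin 3 → EuclideanSpace ℝ (Fin 2))
    (hVor : ∀ p ∈ convexHull ℝ (Set.range t), ∀ w ∈ V, dist p v ≤ dist p w)
    (Z : Finset (EuclideanSpace ℝ (Fin 2)))
    (hZ : ∀ y, y ∈ Z ↔ y = v ∨ (y ∈ I ∧ ∃ j : Fin 3, dist y (t j) < dist v (t j)))
    (hZne : Z.Nonempty) (hUne : (V ∪ I).Nonempty) :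
    ∀ p ∈ convexHull ℝ (Set.range t),
      (V ∪ I).inf' hUne (fun y => dist p y) = Z.inf' hZne (fun z => dist p z) := by
  intro p hp
  have hvZ : v ∈ Z := (hZ v).mpr (Or.inl rfl)
  have hZU : Z ⊆ V ∪ I := fun z hz => by
    rcases (hZ z).mp hz with rfl | ⟨hzI, -⟩
    exacts [Finset.mem_union_left _ hv, Finset.mem_union_right _ hzI]
  refine le_antisymm (Finset.inf'_mono _ hZU hZne) (Finset.le_inf' _ _ fun y hy => ?_)
  by_cases hyZ : y ∈ Z
  · exact Finset.inf'_le _ hyZ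
  have hvy : dist p v ≤ dist p y := by
    rcases Finset.mem_union.mp hy with hyV | hyI
    · exact hVor p hp y hyV
    · refine convexHull_subset_setOf_dist_le_dist ?_ hp
      rintro _ ⟨j, rfl⟩
      rw [dist_comm, dist_comm (t j)]
      exact not_lt.mp fun hj => hyZ ((hZ y).mpr (Or.inr ⟨hyI, j, hj⟩))
  exact (Finset.inf'_le _ hvZ).trans hvy

/-- The geode-triangle conflict-set claim: if the triangle `s = conv{t₁, t₂, t₃}` lies in
the Voronoi region of `v ∈ V`, and `Z` consists of `v` together with the points of `I`
lying in some open disk centered at a vertex `t_j` with radius `dist v t_j`, then for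
every `p ∈ s` the nearest-point distance from `p` to `V ∪ I` equals that to `Z`
(so `𝒱(V ∪ I) ∩ s = 𝒱(Z) ∩ s`). -/
theorem stmt12 (V I : Finset (EuclideanSpace ℝ (Fin 2))) (hV : V.Nonempty) (hI : I.Nonempty)
    (v : EuclideanSpace ℝ (Fin 2)) (hv : v ∈ V)
    (t : Fin 3 → EuclideanSpace ℝ (Fin 2))
    (hVor : ∀ p ∈ convexHull ℝ (Set.range t), ∀ w ∈ V, dist p v ≤ dist p w)
    (Z : Finset (EuclideanSpace ℝ (Fin 2)))
    (hZ : ∀ y, y ∈ Z ↔ y = v ∨ (y ∈ I ∧ ∃ j : Fin 3, dist y (t j) < dist v (t j)))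
    (hZne : Z.Nonempty) (hUne : (V ∪ I).Nonempty) :
    ∀ p ∈ convexHull ℝ (Set.range t),
      (V ∪ I).inf' hUne (fun y => dist p y) = Z.inf' hZne (fun z => dist p z) :=
  stmt12_general V I v hv t hVor Z hZ hZne hUne
end

section
/- Let Î be a finite set with |Î| = m, let λ be a positive integer, and let 𝓘 be a finite family of subsets of Î, each of cardinality exactly λ. Let G = (𝓘, E) be a simple graph on vertex set 𝓘 with |E| ≤ 24·|𝓘| edges, such that every edge {J₁, J₂} ∈ E satisfies |J₁ ∩ J₂| ≤ λ/100. For each p ∈ Î, let 𝓘_p = {J ∈ 𝓘 : p ∈ J} and let E_p be the set of edges of E with both endpoints in 𝓘_p, and suppose |E_p| ≥ |𝓘_p|/4 − 1 for every p ∈ Î. Then |𝓘| ≤ 100·m/λ. -/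
/-!
Double count incidences. Each `J ∈ 𝓘` has `λ` points, so `∑ₚ |𝓘_p| = λ|𝓘|`; each edge `{J₁, J₂}`
lies in `E_p` exactly for the `|J₁ ∩ J₂| ≤ λ/100` points `p ∈ J₁ ∩ J₂`, so
`∑ₚ |E_p| ≤ (λ/100)|E| ≤ 0.24 λ|𝓘|`. Summing `|𝓘_p|/4 - 1 ≤ |E_p|` over the `m` points gives
`λ|𝓘|/4 - m ≤ 0.24 λ|𝓘|`, i.e. `λ|𝓘| ≤ 100 m`.
-/

open Finset

theorem Finset.sum_card_filter_mem_of_forall_card_eq {α : Type*} [Fintype α] [DecidableEq α]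
    {𝓘 : Finset (Finset α)} {n : ℕ} (h : ∀ J ∈ 𝓘, #J = n) :
    ∑ p, #{J ∈ 𝓘 | p ∈ J} = n * #𝓘 := by
  calc ∑ p, #{J ∈ 𝓘 | p ∈ J}
      = ∑ J ∈ 𝓘, #{p ∈ univ | p ∈ J} :=
        sum_card_bipartiteAbove_eq_sum_card_bipartiteBelow (fun p J => p ∈ J)
    _ = ∑ _J ∈ 𝓘, n := sum_congr rfl fun J hJ => by rw [filter_mem_eq_inter, univ_inter, h J hJ]
    _ = n * #𝓘 := by rw [sum_const, smul_eq_mul, mul_comm]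

theorem Sym2.card_filter_forall_mem_mk {α V : Type*} [Fintype α] [DecidableEq α]
    (f : V → Finset α) (a b : V) [DecidablePred fun p => ∀ v ∈ s(a, b), p ∈ f v] :
    #{p | ∀ v ∈ s(a, b), p ∈ f v} = #(f a ∩ f b) := by
  congr 1
  ext p
  simp [Sym2.mem_iff]

theorem SimpleGraph.sum_card_filter_edges_within_le {α V : Type*} [Fintype α] [DecidableEq α]
    (G : SimpleGraph V) [Fintype G.edgeSet] (f : V → Finset α) {c : ℝ}
    (h : ∀ a b, G.Adj a b → (#(f a ∩ f b) : ℝ) ≤ c)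
    [∀ p, DecidablePred fun e : Sym2 V => ∀ v ∈ e, p ∈ f v] :
    (∑ p, #{e ∈ G.edgeFinset | ∀ v ∈ e, p ∈ f v} : ℝ) ≤ c * #G.edgeFinset := by
  calc (∑ p, #{e ∈ G.edgeFinset | ∀ v ∈ e, p ∈ f v} : ℝ)
      = ∑ e ∈ G.edgeFinset, (#{p | ∀ v ∈ e, p ∈ f v} : ℝ) := by
        rw [← Nat.cast_sum, ← Nat.cast_sum]
        exact_mod_cast sum_card_bipartiteAbove_eq_sum_card_bipartiteBelow
          (fun p (e : Sym2 V) => ∀ v ∈ e, p ∈ f v)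
    _ ≤ ∑ _e ∈ G.edgeFinset, c := sum_le_sum fun e he => by
        induction e using Sym2.ind with
        | _ a b => rw [Sym2.card_filter_forall_mem_mk]; exact h a b (G.mem_edgeFinset.mp he)
    _ = c * #G.edgeFinset := by rw [sum_const, nsmul_eq_mul, mul_comm]

/-- The double-counting bound for the `(1/n)`-net construction: if `𝓘` is a family of
`λ`-element subsets of an `m`-element set `Î`, `G` is a simple graph on `𝓘` with at most
`24·|𝓘|` edges, every edge joins sets with intersection of size at most `λ/100`, and for
every `p ∈ Î` the number of edges within `𝓘_p = {J ∈ 𝓘 : p ∈ J}` is at least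
`|𝓘_p|/4 − 1`, then `|𝓘| ≤ 100·m/λ`. -/
theorem stmt13 {α : Type*} [Fintype α] [DecidableEq α] (m lam : ℕ)
    (hm : Fintype.card α = m) (hlam : 0 < lam)
    (𝓘 : Finset (Finset α)) (hcard : ∀ J ∈ 𝓘, J.card = lam)
    (G : SimpleGraph {J : Finset α // J ∈ 𝓘}) [Fintype G.edgeSet]
    (hE : G.edgeFinset.card ≤ 24 * 𝓘.card)
    (hinter : ∀ J₁ J₂ : {J : Finset α // J ∈ 𝓘}, G.Adj J₁ J₂ →
      (((J₁ : Finset α) ∩ (J₂ : Finset α)).card : ℝ) ≤ (lam : ℝ) / 100)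
    (hEp : ∀ p : α,
      (((𝓘.filter (fun J => p ∈ J)).card : ℝ) / 4 - 1 : ℝ) ≤
        ((G.edgeFinset.filter (fun e => ∀ J : {J : Finset α // J ∈ 𝓘}, J ∈ e → p ∈ (J : Finset α))).card : ℝ)) :
    (𝓘.card : ℝ) ≤ 100 * (m : ℝ) / (lam : ℝ) := by
  have hincidences : ∑ p, ((𝓘.filter (fun J => p ∈ J)).card : ℝ) = lam * 𝓘.card := by
    exact_mod_cast sum_card_filter_mem_of_forall_card_eq hcard
  have hedges := G.sum_card_filter_edges_within_le (fun J => (J : Finset α)) hinter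
  have hsum := sum_le_sum fun p (_ : p ∈ univ) => hEp p
  rw [sum_sub_distrib, ← sum_div, hincidences, sum_const, card_univ, hm, nsmul_one] at hsum
  have hbound : (lam : ℝ) * 𝓘.card / 4 - m ≤ lam / 100 * (24 * 𝓘.card) :=
    hsum.trans (hedges.trans (by gcongr; exact_mod_cast hE))
  rw [le_div_iff₀ (by exact_mod_cast hlam)]
  linarith
end

section
/- Let T be a finite set, let p : T → [0, 1] with ∑_{t ∈ T} p(t) = 1, let s : T → ℝ with s(t) ≥ 0 for all t, let n ≥ 2 be an integer, let ε ∈ (0, 1), and let a ≥ 0. Suppose that (i) s(t) ≤ a·log₂ n for every t ∈ T, and (ii) s(t) ≤ a·(1 + log₂(1/p(t))) for every t ∈ T with p(t) > n^{−ε/3}. Then ∑_{t ∈ T} p(t)·s(t) ≤ 4a·(1 + ε⁻¹·H), where H = ∑_{t ∈ T, p(t) > 0} p(t)·log₂(1/p(t)). (This is the computation showing that searching with the pruned, empirically learned search structures—falling back to a balanced structure with O(log n) search time when the pruned structure fails—has expected cost O(1 + ε⁻¹·H).) -/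
/-!
Split the cells at the threshold `n^(-ε/3)`. A heavy cell costs at most `a·(1 + log₂(1/p))`
by hypothesis. A light cell with `p > 0` has `log₂(1/p) ≥ (ε/3)·log₂ n`, so its fallback cost
`a·log₂ n` is at most `(3a/ε)·log₂(1/p)`. Hence every cell satisfies
`p·s ≤ a·p + (3a/ε)·p·log₂(1/p)`, and summing gives `a + (3a/ε)·H`.
-/

open Finset Real

section

variable {β : ℝ}

lemma mul_logb_one_div_nonneg (hβ : 1 < β) {x : ℝ} (hx0 : 0 ≤ x) (hx1 : x ≤ 1) :
    0 ≤ x * logb β (1 / x) := by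
  rw [one_div, logb_inv, mul_neg, neg_nonneg]
  exact mul_nonpos_of_nonneg_of_nonpos hx0 (logb_nonpos hβ hx0 hx1)

lemma mul_logb_le_logb_one_div_of_le_rpow_neg (hβ : 1 < β) {b c x : ℝ} (hb : 0 ≤ b)
    (hc : 0 < c) (hx : 0 < x) (hxb : x ≤ b ^ (-c)) : c * logb β b ≤ logb β (1 / x) := by
  rcases hb.eq_or_lt with rfl | hb
  · rw [zero_rpow (neg_ne_zero.mpr hc.ne')] at hxb
    linarith
  calc c * logb β b = -logb β (b ^ (-c)) := by rw [logb_rpow_eq_mul_logb_of_pos hb]; ring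
    _ ≤ -logb β x := neg_le_neg (logb_le_logb_of_le hβ hx hxb)
    _ = logb β (1 / x) := by rw [one_div, logb_inv]

lemma mul_le_of_le_logb_of_le_one_add_logb (hβ : 1 < β) {a b c p s : ℝ} (ha : 0 ≤ a)
    (hb : 0 ≤ b) (hc0 : 0 < c) (hc1 : c ≤ 1) (hp0 : 0 ≤ p) (hp1 : p ≤ 1)
    (hs : s ≤ a * logb β b) (hs' : b ^ (-c) < p → s ≤ a * (1 + logb β (1 / p))) :
    p * s ≤ a * p + a / c * (p * logb β (1 / p)) := by
  by_cases hheavy : b ^ (-c) < p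
  · calc p * s ≤ p * (a * (1 + logb β (1 / p))) := mul_le_mul_of_nonneg_left (hs' hheavy) hp0
      _ = a * p + a * (p * logb β (1 / p)) := by ring
      _ ≤ a * p + a / c * (p * logb β (1 / p)) := by
        gcongr
        · exact mul_logb_one_div_nonneg hβ hp0 hp1
        · exact le_div_self ha hc0 hc1
  rcases hp0.eq_or_lt with rfl | hp
  · simp
  have hlog := mul_logb_le_logb_one_div_of_le_rpow_neg hβ hb hc0 hp (not_lt.mp hheavy)
  calc p * s ≤ p * (a / c * (c * logb β b)) := by
        rw [← mul_assoc (a / c), div_mul_cancel₀ a hc0.ne']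
        exact mul_le_mul_of_nonneg_left hs hp0
    _ ≤ p * (a / c * logb β (1 / p)) := by gcongr
    _ = a / c * (p * logb β (1 / p)) := by ring
    _ ≤ a * p + a / c * (p * logb β (1 / p)) := le_add_of_nonneg_left (by positivity)

lemma sum_mul_le_of_le_logb_of_le_one_add_logb {T : Type*} [Fintype T] (hβ : 1 < β)
    {a b c : ℝ} {p s : T → ℝ} (ha : 0 ≤ a) (hb : 0 ≤ b) (hc0 : 0 < c) (hc1 : c ≤ 1)
    (hp0 : ∀ t, 0 ≤ p t) (hp1 : ∑ t, p t = 1) (hs : ∀ t, s t ≤ a * logb β b)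
    (hs' : ∀ t, b ^ (-c) < p t → s t ≤ a * (1 + logb β (1 / p t))) :
    ∑ t, p t * s t ≤ a + a / c * ∑ t, p t * logb β (1 / p t) := by
  have hp_le_one (t : T) : p t ≤ 1 :=
    hp1 ▸ single_le_sum (fun i _ => hp0 i) (mem_univ t)
  calc ∑ t, p t * s t ≤ ∑ t, (a * p t + a / c * (p t * logb β (1 / p t))) :=
        sum_le_sum fun t _ => mul_le_of_le_logb_of_le_one_add_logb hβ ha hb hc0 hc1
          (hp0 t) (hp_le_one t) (hs t) (hs' t)
    _ = a + a / c * ∑ t, p t * logb β (1 / p t) := by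
        rw [sum_add_distrib, ← mul_sum, ← mul_sum, hp1, mul_one]

end

theorem stmt14_general {T : Type*} [Fintype T] (p : T → ℝ) (hp0 : ∀ t, 0 ≤ p t)
    (hp1 : ∑ t, p t = 1) (s : T → ℝ)
    (n : ℕ) (ε : ℝ) (hε : ε ∈ Set.Ioo (0 : ℝ) 1) (a : ℝ) (ha : 0 ≤ a)
    (h1 : ∀ t, s t ≤ a * Real.logb 2 n)
    (h2 : ∀ t, (n : ℝ) ^ (-(ε / 3)) < p t → s t ≤ a * (1 + Real.logb 2 (1 / p t))) :
    ∑ t, p t * s t ≤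
      4 * a * (1 + ε⁻¹ * ∑ t ∈ Finset.univ.filter (fun t => 0 < p t),
        p t * Real.logb 2 (1 / p t)) := by
  obtain ⟨hε0, hε1⟩ := hε
  have hH : ∑ t ∈ univ.filter (fun t => 0 < p t), p t * logb 2 (1 / p t)
      = ∑ t, p t * logb 2 (1 / p t) :=
    sum_filter_of_ne fun t _ hne => (hp0 t).lt_of_ne fun h => hne (by simp [← h])
  have hH0 : 0 ≤ ∑ t, p t * logb 2 (1 / p t) :=
    sum_nonneg fun t _ => mul_logb_one_div_nonneg one_lt_two (hp0 t)
      (hp1 ▸ single_le_sum (fun i _ => hp0 i) (mem_univ t))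
  rw [hH]
  calc ∑ t, p t * s t ≤ a + a / (ε / 3) * ∑ t, p t * logb 2 (1 / p t) :=
        sum_mul_le_of_le_logb_of_le_one_add_logb one_lt_two ha (Nat.cast_nonneg n)
          (by positivity) (by linarith) hp0 hp1 h1 h2
    _ = a + 3 * a * ε⁻¹ * ∑ t, p t * logb 2 (1 / p t) := by ring
    _ ≤ 4 * a * (1 + ε⁻¹ * ∑ t, p t * logb 2 (1 / p t)) := by
        nlinarith [mul_nonneg (mul_nonneg ha (inv_nonneg.mpr hε0.le)) hH0]

/-- The pruned-search-structure cost computation: if every cell's search time satisfies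
`s(t) ≤ a·log₂ n`, and `s(t) ≤ a·(1 + log₂(1/p(t)))` whenever `p(t) > n^{−ε/3}`, then the
expected search time is at most `4a·(1 + ε⁻¹·H)`, where
`H = ∑_{p(t) > 0} p(t)·log₂(1/p(t))` is the entropy of the probability vector `p`. -/
theorem stmt14 {T : Type*} [Fintype T] (p : T → ℝ) (hp0 : ∀ t, 0 ≤ p t)
    (hp1 : ∑ t, p t = 1) (s : T → ℝ) (hs0 : ∀ t, 0 ≤ s t)
    (n : ℕ) (hn : 2 ≤ n) (ε : ℝ) (hε : ε ∈ Set.Ioo (0 : ℝ) 1) (a : ℝ) (ha : 0 ≤ a)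
    (h1 : ∀ t, s t ≤ a * Real.logb 2 n)
    (h2 : ∀ t, (n : ℝ) ^ (-(ε / 3)) < p t → s t ≤ a * (1 + Real.logb 2 (1 / p t))) :
    ∑ t, p t * s t ≤
      4 * a * (1 + ε⁻¹ * ∑ t ∈ Finset.univ.filter (fun t => 0 < p t),
        p t * Real.logb 2 (1 / p t)) :=
  stmt14_general p hp0 hp1 s n ε hε a ha h1 h2
end
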